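/- arXiv:1807.10988 — 12 statements merged into one kernel-verified Lean document; each statement's English description precedes it below -/
import Mathlib

section
/- Let G be a graph, let β be a solution to the Naji system of G, and let c be a vertex of G. Define δ_c(u,v) = 1 if u = c, or if v = c and uv is an edge of G; otherwise δ_c(u,v) = 0. Then β + δ_c is also a solution to the Naji system of G. -/
/-! The Naji system is affine over `𝔽₂`, so adding a solution of the homogeneous system to a
solution gives a solution. Writing `δ_c(u,v) = [u = c] + [v = c ∧ uv ∈ E]` (the two cases are
disjoint since `G` is loopless), every equation of the homogeneous system for `δ_c` reduces to a
sum in which each indicator appears twice. -/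

/-- A solution to the Naji system of a graph `G`. -/
def NajiSolution {V : Type*} (G : SimpleGraph V) (β : V → V → ZMod 2) : Prop :=
  (∀ v w : V, G.Adj v w → β v w + β w v = 1) ∧
  (∀ x v w : V, x ≠ v → x ≠ w → G.Adj v w → ¬G.Adj x v → ¬G.Adj x w →
    β x v + β x w = 0) ∧
  (∀ x v w : V, v ≠ w → G.Adj x v → G.Adj x w → ¬G.Adj v w →
    β v w + β w v + β x v + β x w = 1)

namespace NajiSolution

variable {V : Type*} (G : SimpleGraph V)

def Homogeneous (γ : V → V → ZMod 2) : Prop :=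
  (∀ v w : V, G.Adj v w → γ v w + γ w v = 0) ∧
  (∀ x v w : V, x ≠ v → x ≠ w → G.Adj v w → ¬G.Adj x v → ¬G.Adj x w →
    γ x v + γ x w = 0) ∧
  (∀ x v w : V, v ≠ w → G.Adj x v → G.Adj x w → ¬G.Adj v w →
    γ v w + γ w v + γ x v + γ x w = 0)

variable {G}

theorem add_homogeneous {β γ : V → V → ZMod 2} (hβ : NajiSolution G β)
    (hγ : Homogeneous G γ) : NajiSolution G (fun u v => β u v + γ u v) := by
  obtain ⟨hβ₁, hβ₂, hβ₃⟩ := hβ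
  obtain ⟨hγ₁, hγ₂, hγ₃⟩ := hγ
  refine ⟨fun v w hvw => ?_, fun x v w hxv hxw hvw hnv hnw => ?_,
    fun x v w hvw hxv hxw hnvw => ?_⟩
  · linear_combination hβ₁ v w hvw + hγ₁ v w hvw
  · linear_combination hβ₂ x v w hxv hxw hvw hnv hnw + hγ₂ x v w hxv hxw hvw hnv hnw
  · linear_combination hβ₃ x v w hvw hxv hxw hnvw + hγ₃ x v w hvw hxv hxw hnvw

end NajiSolution

section Reorientation

variable {V : Type*} [DecidableEq V] (G : SimpleGraph V) [DecidableRel G.Adj]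

/-- The function `δ_c` of the paper. -/
def reorientation (c : V) (u v : V) : ZMod 2 :=
  if u = c ∨ (v = c ∧ G.Adj u v) then 1 else 0

theorem reorientation_eq (c u v : V) :
    reorientation G c u v = (if u = c then 1 else 0) + (if v = c ∧ G.Adj u v then 1 else 0) := by
  have not_both : u = c → v = c → ¬G.Adj u v := by
    rintro rfl rfl
    exact G.irrefl
  unfold reorientation
  split_ifs <;> grind

theorem reorientation_homogeneous (c : V) :
    NajiSolution.Homogeneous G (reorientation G c) := by
  refine ⟨fun v w hvw => ?_, fun x v w _ _ _ hnv hnw => ?_,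
    fun x v w _ hxv hxw hnvw => ?_⟩
  · simp only [reorientation_eq, hvw, hvw.symm, and_true]
    grind
  · simp only [reorientation_eq, hnv, hnw, and_false, if_false, add_zero]
    grind
  · simp only [reorientation_eq, hnvw, G.adj_comm w v, hxv, hxw,
      and_false, and_true, if_false, add_zero]
    grind

end Reorientation

/-- Reorienting at a vertex `c` preserves solutions of the Naji system:
`δ_c(u,v) = 1` iff `u = c`, or `v = c` and `uv` is an edge. -/
theorem naji_reorient {V : Type*} [DecidableEq V] (G : SimpleGraph V)
    [DecidableRel G.Adj] (β : V → V → ZMod 2) (hβ : NajiSolution G β) (c : V) :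
    NajiSolution G (fun u v => β u v + (if u = c ∨ (v = c ∧ G.Adj u v) then 1 else 0)) :=
  hβ.add_homogeneous (reorientation_homogeneous G c)
end

section
/- Let G be a graph with a solution β to its Naji system, and suppose G contains an induced claw on vertices {x, a, b, c} where x is adjacent to a, b, c and no two of a, b, c are adjacent. Then exactly one or exactly three of the quantities β(a,b)+β(a,c), β(b,a)+β(b,c), β(c,a)+β(c,b) equal 1; equivalently, (β(a,b)+β(a,c)) + (β(b,a)+β(b,c)) + (β(c,a)+β(c,b)) = 1 in 𝔽₂. -/
theorem NajiSolution.add_swap_eq_of_adj_of_adj {V : Type*} {G : SimpleGraph V}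
    {β : V → V → ZMod 2} (hβ : NajiSolution G β) {x v w : V} (hvw : v ≠ w)
    (hxv : G.Adj x v) (hxw : G.Adj x w) (nvw : ¬G.Adj v w) :
    β v w + β w v = 1 + β x v + β x w := by
  linear_combination hβ.2.2 x v w hvw hxv hxw nvw - (β x v + β x w) * ZMod.natCast_self 2

/-- For an induced claw on `{x,a,b,c}` with centre `x`, the three quantities
`β a b + β a c`, `β b a + β b c`, `β c a + β c b` sum to `1` over `𝔽₂`,
i.e. exactly one or exactly three of them equal `1`. -/
theorem naji_claw_parity {V : Type*} (G : SimpleGraph V) (β : V → V → ZMod 2)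
    (hβ : NajiSolution G β) (x a b c : V)
    (hab : a ≠ b) (hac : a ≠ c) (hbc : b ≠ c)
    (hxa : G.Adj x a) (hxb : G.Adj x b) (hxc : G.Adj x c)
    (nab : ¬G.Adj a b) (nbc : ¬G.Adj b c) (nca : ¬G.Adj c a) :
    (β a b + β a c) + (β b a + β b c) + (β c a + β c b) = 1 := by
  calc (β a b + β a c) + (β b a + β b c) + (β c a + β c b)
      = (β a b + β b a) + (β b c + β c b) + (β c a + β a c) := by ring
    _ = (1 + β x a + β x b) + (1 + β x b + β x c) + (1 + β x c + β x a) := by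
      rw [hβ.add_swap_eq_of_adj_of_adj hab hxa hxb nab,
        hβ.add_swap_eq_of_adj_of_adj hbc hxb hxc nbc,
        hβ.add_swap_eq_of_adj_of_adj hac.symm hxc hxa nca]
    -- each `β x v` occurs twice and `3 = 1` in `𝔽₂`
    _ = 1 := by
      linear_combination (1 + β x a + β x b + β x c) * ZMod.natCast_self 2
end

section
/- Let 𝒜 be a finite collection of closed arcs of a circle whose union covers the circle. Then there is a sequence (A₁, …, A_k) of arcs in 𝒜 covering the circle such that for each i (indices modulo k), the arc A_i has nonempty intersection with A_{i−1} and A_{i+1} but is disjoint from all other arcs A_j in the sequence. -/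
/-!
Lift every arc to a real interval of length less than `1`. A cyclic sequence of `k` arcs, each
starting before the previous one ends and winding once around the circle, lifts to a sequence of
intervals on `ℝ` which is periodic up to a shift by `1` after `k` steps; such a chain exists
because `[0, 1]` is connected. Take one of minimal period `k`. Minimality forces every interval to
be disjoint from the one two steps later (otherwise the one in between could be dropped), so the
left endpoints increase and two lifted intervals meet iff their indices differ by at most `1`.
Two arcs meet iff some of their lifts do, which reduces this to indices modulo `k`.
-/

open Set

namespace ArcCover

def arc (I : ℝ × ℝ) : Set (AddCircle (1 : ℝ)) := ((↑) : ℝ → AddCircle (1 : ℝ)) '' Icc I.1 I.2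

lemma coe_eq_coe_iff {x y : ℝ} : (x : AddCircle (1 : ℝ)) = y ↔ ∃ m : ℤ, x = y + m := by
  rw [← sub_eq_zero, ← AddCircle.coe_sub, AddCircle.coe_eq_zero_iff]
  simp only [zsmul_eq_mul, mul_one, eq_sub_iff_add_eq', eq_comm (a := x)]

lemma arc_add_intCast (I : ℝ × ℝ) (m : ℤ) : arc (I + m) = arc I := by
  ext z
  constructor
  · rintro ⟨x, ⟨h₁, h₂⟩, rfl⟩
    simp only [Prod.fst_add, Prod.snd_add, Prod.fst_intCast, Prod.snd_intCast] at h₁ h₂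
    exact ⟨x - m, ⟨by linarith, by linarith⟩, coe_eq_coe_iff.2 ⟨-m, by push_cast; ring⟩⟩
  · rintro ⟨x, ⟨h₁, h₂⟩, rfl⟩
    refine ⟨x + m, ⟨?_, ?_⟩, coe_eq_coe_iff.2 ⟨m, rfl⟩⟩ <;> simp <;> linarith

lemma arc_inter_nonempty_iff (I J : ℝ × ℝ) :
    (arc I ∩ arc J).Nonempty ↔ ∃ m : ℤ, (Icc I.1 I.2 ∩ Icc (J + m).1 (J + m).2).Nonempty := by
  constructor
  · rintro ⟨_, ⟨x, hx, rfl⟩, y, ⟨hy₁, hy₂⟩, hxy⟩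
    obtain ⟨m, rfl⟩ := coe_eq_coe_iff.1 hxy.symm
    refine ⟨m, y + m, hx, ?_⟩
    simp only [Prod.fst_add, Prod.snd_add, Prod.fst_intCast, Prod.snd_intCast]
    constructor <;> linarith
  · rintro ⟨m, x, hx, hx₁, hx₂⟩
    refine ⟨x, mem_image_of_mem _ hx, x - m, ⟨?_, ?_⟩,
      coe_eq_coe_iff.2 ⟨-m, by push_cast; ring⟩⟩ <;> simp at hx₁ hx₂ <;> linarith

lemma exists_eq_arc {S : Set (AddCircle (1 : ℝ))} (hcl : IsClosed S) (hconn : IsConnected S)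
    (hS : S ≠ univ) : ∃ I : ℝ × ℝ, I.1 ≤ I.2 ∧ I.2 - I.1 < 1 ∧ S = arc I := by
  obtain ⟨p, hp⟩ := (ne_univ_iff_exists_notMem S).1 hS
  obtain ⟨t, rfl⟩ := QuotientAddGroup.mk_surjective p
  let φ := AddCircle.openPartialHomeomorphCoe (1 : ℝ) t
  have hSt : S ⊆ φ.target := fun z hz hzt => hp (hzt ▸ hz)
  set T := φ.symm '' S
  have hTsrc : T ⊆ Ioo t (t + 1) := (image_mono hSt).trans φ.symm_image_target_eq_source.subset
  have hTconn : IsConnected T := hconn.image _ (φ.continuousOn_symm.mono hSt)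
  have hTcpt : IsCompact T := hcl.isCompact.image_of_continuousOn (φ.continuousOn_symm.mono hSt)
  have hT := eq_Icc_of_connected_compact hTconn hTcpt
  have hinf := hTsrc (hTcpt.sInf_mem hTconn.nonempty)
  have hsup := hTsrc (hTcpt.sSup_mem hTconn.nonempty)
  refine ⟨(sInf T, sSup T), csInf_le_csSup hTconn.nonempty hTcpt.bddBelow hTcpt.bddAbove,
    by dsimp only; linarith [hinf.1, hsup.2], ?_⟩
  rw [arc, ← hT]
  exact (φ.image_symm_image_of_subset_target hSt).symm

def IsLinkedChain (F : Set (ℝ × ℝ)) (L : ℕ) (c : ℕ → ℝ × ℝ) : Prop :=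
  (∀ i ≤ L, c i ∈ F) ∧ ∀ i < L, (c (i + 1)).1 ≤ (c i).2

lemma IsLinkedChain.mono {F G : Set (ℝ × ℝ)} {L : ℕ} {c : ℕ → ℝ × ℝ}
    (hc : IsLinkedChain F L c) (hFG : F ⊆ G) : IsLinkedChain G L c :=
  ⟨fun i hi => hFG (hc.1 i hi), hc.2⟩

lemma IsLinkedChain.snoc {F : Set (ℝ × ℝ)} {L : ℕ} {c : ℕ → ℝ × ℝ}
    (hc : IsLinkedChain F L c) {J : ℝ × ℝ} (hJ : J ∈ F) (hlink : J.1 ≤ (c L).2) :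
    IsLinkedChain F (L + 1) (fun i => if i ≤ L then c i else J) := by
  refine ⟨fun i hi => ?_, fun i hi => ?_⟩
  · dsimp only
    split_ifs
    exacts [hc.1 i ‹_›, hJ]
  · obtain hi | rfl := Nat.lt_succ_iff_lt_or_eq.1 hi
    · simpa [hi.le, Nat.succ_le_of_lt hi] using hc.2 i hi
    · simpa using hlink

lemma exists_linkedChain (F : Finset (ℝ × ℝ)) {u v : ℝ} (huv : u ≤ v)
    (hF : Icc u v ⊆ ⋃ I ∈ F, Icc I.1 I.2) :
    ∃ L c, IsLinkedChain F L c ∧ (c 0).1 ≤ u ∧ v ≤ (c L).2 := by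
  classical
  let Reach (J : ℝ × ℝ) : Prop := ∃ L c, IsLinkedChain F L c ∧ (c 0).1 ≤ u ∧ c L = J
  have hreach : ∀ I ∈ F, ∀ J ∈ F, Reach I → J.1 ≤ I.2 → Reach J := by
    rintro I - J hJ ⟨L, c, hc, hc0, rfl⟩ hJI
    exact ⟨L + 1, _, hc.snoc hJ hJI, by simpa using hc0, by simp⟩
  -- The intervals reachable from `u` and the others have disjoint unions, both closed, covering
  -- the connected `[u, v]`.
  let U := ⋃ I ∈ F.filter Reach, Icc I.1 I.2
  let W := ⋃ I ∈ F.filter (¬ Reach ·), Icc I.1 I.2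
  have hUW : ∀ x ∈ U, x ∉ W := by
    intro x hxU hxW
    simp only [U, W, mem_iUnion, Finset.mem_filter, exists_prop] at hxU hxW
    obtain ⟨I, ⟨hI, hIr⟩, hxI⟩ := hxU
    obtain ⟨J, ⟨hJ, hJr⟩, hxJ⟩ := hxW
    exact hJr (hreach I hI J hJ hIr (hxJ.1.trans hxI.2))
  have hcov : Icc u v ⊆ U ∪ W := by
    intro x hx
    obtain ⟨I, hI, hxI⟩ := mem_iUnion₂.1 (hF hx)
    by_cases hIr : Reach I
    exacts [Or.inl (mem_biUnion (Finset.mem_filter.2 ⟨hI, hIr⟩) hxI),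
      Or.inr (mem_biUnion (Finset.mem_filter.2 ⟨hI, hIr⟩) hxI)]
  have huU : u ∈ U := by
    obtain ⟨I, hI, huI⟩ := mem_iUnion₂.1 (hF (left_mem_Icc.2 huv))
    refine mem_biUnion (Finset.mem_filter.2 ⟨hI, 0, fun _ => I, ?_, huI.1, rfl⟩) huI
    exact ⟨fun _ _ => hI, fun i hi => absurd hi (Nat.not_lt_zero i)⟩
  have hvU : v ∈ U := by
    by_contra hvU
    have hvW := (hcov (right_mem_Icc.2 huv)).resolve_left hvU
    obtain ⟨x, -, hxU, hxW⟩ := isPreconnected_closed_iff.1 isPreconnected_Icc U W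
      (isClosed_biUnion_finset fun _ _ => isClosed_Icc)
      (isClosed_biUnion_finset fun _ _ => isClosed_Icc) hcov
      ⟨u, left_mem_Icc.2 huv, huU⟩ ⟨v, right_mem_Icc.2 huv, hvW⟩
    exact hUW x hxU hxW
  obtain ⟨J, hJ, hvJ⟩ := mem_iUnion₂.1 hvU
  obtain ⟨L, c, hc, hc0, rfl⟩ := (Finset.mem_filter.1 hJ).2
  exact ⟨L, c, hc, hc0, hvJ.2⟩

section LinkedSequence

variable {e : ℤ → ℝ × ℝ}

lemma exists_mem_Icc_of_link (hlink : ∀ n, (e (n + 1)).1 ≤ (e n).2) (n : ℕ) {x : ℝ}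
    (h₀ : (e 0).1 ≤ x) (hn : x ≤ (e n).2) : ∃ i, x ∈ Icc (e i).1 (e i).2 := by
  induction n with
  | zero => exact ⟨0, h₀, hn⟩
  | succ n ih =>
    by_cases hx : (e (n + 1 : ℕ)).1 ≤ x
    · exact ⟨_, hx, hn⟩
    · exact ih ((not_le.1 hx).le.trans (by simpa using hlink n))

lemma Icc_inter_Icc_nonempty_iff (hle : ∀ n, (e n).1 ≤ (e n).2)
    (hlink : ∀ n, (e (n + 1)).1 ≤ (e n).2) (hsep : ∀ n, (e n).2 < (e (n + 2)).1) (u w : ℤ) :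
    (Icc (e u).1 (e u).2 ∩ Icc (e w).1 (e w).2).Nonempty ↔ |u - w| ≤ 1 := by
  have hmono : StrictMono fun n => (e n).1 := strictMono_int_of_lt_succ fun n => by
    have h₁ := hlink (n - 1)
    have h₂ := hsep (n - 1)
    rw [sub_add_cancel] at h₁
    rw [show n - 1 + 2 = n + 1 by ring] at h₂
    linarith
  have key : ∀ u w, u ≤ w →
      ((Icc (e u).1 (e u).2 ∩ Icc (e w).1 (e w).2).Nonempty ↔ w ≤ u + 1) := by
    intro u w huw
    simp only [Icc_inter_Icc, nonempty_Icc, max_le_iff, le_min_iff]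
    constructor
    · rintro ⟨⟨-, h⟩, -⟩
      by_contra! hw
      have := hmono.monotone (show u + 2 ≤ w by omega)
      linarith [hsep u]
    · intro hw
      obtain rfl | rfl : w = u ∨ w = u + 1 := by omega
      · exact ⟨⟨hle w, hle w⟩, hle w, hle w⟩
      · exact ⟨⟨hle u, hlink u⟩, (hmono (lt_add_one u)).le.trans (hle _), hle _⟩
  rcases le_total u w with h | h
  · rw [key u w h, abs_le]
    omega
  · rw [inter_comm, key w u h, abs_le]
    omega

end LinkedSequence

def periodicExtension (c : ℕ → ℝ × ℝ) (k : ℕ) (n : ℤ) : ℝ × ℝ :=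
  c (n % k).toNat + ((n / k : ℤ) : ℝ × ℝ)

lemma periodicExtension_add_mul (c : ℕ → ℝ × ℝ) {k r : ℕ} (hr : r < k) (q : ℤ) :
    periodicExtension c k (r + q * k) = c r + q := by
  have hk : (0 : ℤ) < k := by omega
  obtain ⟨hdiv, hmod⟩ := (Int.ediv_emod_unique hk).2 ⟨show (r : ℤ) + k * q = r + q * k by ring,
    by omega, by omega⟩
  simp [periodicExtension, hdiv, hmod]

lemma exists_eq_add_mul {k : ℕ} (hk : 0 < k) (n : ℤ) : ∃ r < k, ∃ q : ℤ, n = r + q * k := by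
  have hk' : (0 : ℤ) < k := by omega
  have := Int.emod_nonneg n hk'.ne'
  have := Int.emod_lt_of_pos n hk'
  refine ⟨(n % k).toNat, by omega, n / k, ?_⟩
  rw [Int.toNat_of_nonneg (by omega), Int.emod_add_ediv_mul]

section PeriodicChain

variable (𝒜 : Set (Set (AddCircle (1 : ℝ))))

structure IsArcLift (I : ℝ × ℝ) : Prop where
  arc_mem : arc I ∈ 𝒜
  fst_le_snd : I.1 ≤ I.2
  snd_sub_fst_lt_one : I.2 - I.1 < 1

/-- The lift to `ℝ` of a cyclic sequence of `k` arcs of `𝒜` winding once around the circle: after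
`k` steps the lifted intervals come back shifted by one turn. -/
structure IsPeriodicChain (k : ℕ) (e : ℤ → ℝ × ℝ) : Prop where
  isArcLift : ∀ n, IsArcLift 𝒜 (e n)
  link : ∀ n, (e (n + 1)).1 ≤ (e n).2
  add_mul : ∀ n m : ℤ, e (n + m * k) = e n + m

variable {𝒜}

lemma IsArcLift.add_intCast {I : ℝ × ℝ} (hI : IsArcLift 𝒜 I) (m : ℤ) : IsArcLift 𝒜 (I + m) where
  arc_mem := (arc_add_intCast I m).symm ▸ hI.arc_mem
  fst_le_snd := by simpa using hI.fst_le_snd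
  snd_sub_fst_lt_one := by simpa using hI.snd_sub_fst_lt_one

lemma IsLinkedChain.exists_isPeriodicChain {L : ℕ} {c : ℕ → ℝ × ℝ}
    (hc : IsLinkedChain {I | IsArcLift 𝒜 I} L c) (hwrap : (c 0).1 + 1 ≤ (c L).2) :
    ∃ e, IsPeriodicChain 𝒜 (L + 1) e := by
  refine ⟨periodicExtension c (L + 1), ⟨fun n => ?_, fun n => ?_, fun n m => ?_⟩⟩
  · obtain ⟨r, hr, q, rfl⟩ := exists_eq_add_mul L.succ_pos n
    rw [periodicExtension_add_mul c hr]
    exact (hc.1 r (Nat.lt_succ_iff.1 hr)).add_intCast q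
  · obtain ⟨r, hr, q, rfl⟩ := exists_eq_add_mul L.succ_pos n
    rw [periodicExtension_add_mul c hr]
    obtain hr | rfl := Nat.lt_succ_iff_lt_or_eq.1 hr
    · rw [show (r : ℤ) + q * (L + 1 : ℕ) + 1 = (r + 1 : ℕ) + q * (L + 1 : ℕ) by push_cast; ring,
        periodicExtension_add_mul c (Nat.succ_lt_succ hr)]
      simpa using hc.2 r hr
    · rw [show (r : ℤ) + q * (r + 1 : ℕ) + 1 = (0 : ℕ) + (q + 1) * (r + 1 : ℕ) by push_cast; ring,
        periodicExtension_add_mul c r.succ_pos]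
      simp only [Prod.fst_add, Prod.snd_add, Prod.fst_intCast, Prod.snd_intCast, Int.cast_add,
        Int.cast_one, Prod.fst_one]
      linarith
  · obtain ⟨r, hr, q, rfl⟩ := exists_eq_add_mul L.succ_pos n
    rw [add_assoc, ← add_mul, periodicExtension_add_mul c hr, periodicExtension_add_mul c hr,
      Int.cast_add, add_assoc]

lemma IsPeriodicChain.add_period {k : ℕ} {e : ℤ → ℝ × ℝ} (he : IsPeriodicChain 𝒜 k e) (n : ℤ) :
    e (n + k) = e n + 1 := by
  simpa using he.add_mul n 1

lemma IsPeriodicChain.two_le {k : ℕ} {e : ℤ → ℝ × ℝ} (he : IsPeriodicChain 𝒜 k e) : 2 ≤ k := by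
  by_contra! hk
  have hlink := he.link 0
  have hlen := (he.isArcLift 0).snd_sub_fst_lt_one
  interval_cases k
  · simpa using he.add_period 0
  · rw [show (0 : ℤ) + 1 = 0 + (1 : ℕ) by simp, he.add_period] at hlink
    simp only [Prod.fst_add, Prod.fst_one] at hlink
    linarith

/-- Otherwise `e (n + 1)` could be dropped, leaving a chain of period `k - 1`. -/
lemma IsPeriodicChain.snd_lt_fst_add_two {k : ℕ} {e : ℤ → ℝ × ℝ} (he : IsPeriodicChain 𝒜 k e)
    (hmin : ∀ j < k, ∀ e', ¬ IsPeriodicChain 𝒜 j e') (n : ℤ) : (e n).2 < (e (n + 2)).1 := by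
  by_contra! h
  obtain ⟨L, rfl⟩ : ∃ L, k = L + 2 := ⟨k - 2, by have := he.two_le; omega⟩
  have hc : IsLinkedChain {I | IsArcLift 𝒜 I} L (fun i => e (n + 2 + i)) :=
    ⟨fun i _ => he.isArcLift _, fun i _ => by simpa [add_assoc] using he.link (n + 2 + i)⟩
  have hwrap : (e (n + 2 + (0 : ℕ))).1 + 1 ≤ (e (n + 2 + L)).2 := by
    rw [show n + 2 + L = n + (L + 2 : ℕ) by push_cast; ring, he.add_period]
    simpa using h
  obtain ⟨e', he'⟩ := hc.exists_isPeriodicChain hwrap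
  exact hmin (L + 1) (by omega) e' he'

lemma IsPeriodicChain.iUnion_arc_eq_univ {k : ℕ} {e : ℤ → ℝ × ℝ}
    (he : IsPeriodicChain 𝒜 k e) : ⋃ n, arc (e n) = univ := by
  refine eq_univ_of_forall fun z => ?_
  obtain ⟨x, hx, rfl⟩ : z ∈ ((↑) : ℝ → AddCircle (1 : ℝ)) '' Ico (e 0).1 ((e 0).1 + 1) := by
    rw [AddCircle.coe_image_Ico_eq]
    trivial
  have hk := he.two_le
  have hlast : (e 0).1 + 1 ≤ (e (k - 1 : ℕ)).2 := by
    have := he.link (k - 1 : ℕ)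
    rwa [show ((k - 1 : ℕ) : ℤ) + 1 = 0 + (k : ℕ) by omega, he.add_period] at this
  obtain ⟨i, hi⟩ := exists_mem_Icc_of_link he.link (k - 1) hx.1 (hx.2.le.trans hlast)
  exact mem_iUnion.2 ⟨i, mem_image_of_mem _ hi⟩

lemma IsPeriodicChain.arc_val_intCast {k : ℕ} [NeZero k] {e : ℤ → ℝ × ℝ}
    (he : IsPeriodicChain 𝒜 k e) (n : ℤ) : arc (e ((n : ZMod k).val : ℤ)) = arc (e n) := by
  rw [ZMod.val_intCast, ← arc_add_intCast _ (n / k), ← he.add_mul, Int.emod_add_ediv_mul]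

lemma IsPeriodicChain.arc_inter_nonempty_iff {k : ℕ} {e : ℤ → ℝ × ℝ}
    (he : IsPeriodicChain 𝒜 k e) (hsep : ∀ n, (e n).2 < (e (n + 2)).1) (u v : ℤ) :
    (arc (e u) ∩ arc (e v)).Nonempty ↔ ∃ m : ℤ, |u - (v + m * k)| ≤ 1 := by
  simp only [ArcCover.arc_inter_nonempty_iff, ← he.add_mul,
    Icc_inter_Icc_nonempty_iff (fun n => (he.isArcLift n).fst_le_snd) he.link hsep]

end PeriodicChain

lemma intCast_eq_intCast_iff_exists {k : ℕ} {a b : ℤ} :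
    (a : ZMod k) = b ↔ ∃ m : ℤ, a + m * k = b := by
  rw [ZMod.intCast_eq_intCast_iff, Int.modEq_iff_add_fac]
  simp only [eq_comm (a := b), mul_comm]

lemma exists_abs_sub_add_mul_le_one_iff {k : ℕ} (u v : ℤ) :
    (∃ m : ℤ, |u - (v + m * k)| ≤ 1) ↔
      (v : ZMod k) = u - 1 ∨ (v : ZMod k) = u ∨ (v : ZMod k) = u + 1 := by
  rw [show (u : ZMod k) - 1 = ((u - 1 : ℤ) : ZMod k) by push_cast; rfl,
    show (u : ZMod k) + 1 = ((u + 1 : ℤ) : ZMod k) by push_cast; rfl,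
    intCast_eq_intCast_iff_exists, intCast_eq_intCast_iff_exists, intCast_eq_intCast_iff_exists]
  constructor
  · rintro ⟨m, hm⟩
    rw [abs_le] at hm
    rcases (by omega : v + m * k = u - 1 ∨ v + m * k = u ∨ v + m * k = u + 1) with h | h | h
    exacts [Or.inl ⟨m, h⟩, Or.inr (Or.inl ⟨m, h⟩), Or.inr (Or.inr ⟨m, h⟩)]
  · rintro (⟨m, hm⟩ | ⟨m, hm⟩ | ⟨m, hm⟩) <;> exact ⟨m, by rw [abs_le]; omega⟩

lemma exists_isPeriodicChain (𝒜 : Finset (Set (AddCircle (1 : ℝ))))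
    (harc : ∀ A ∈ 𝒜, IsClosed A ∧ IsConnected A ∧ A ≠ univ) (hcover : ⋃ A ∈ 𝒜, A = univ) :
    ∃ k e, IsPeriodicChain (𝒜 : Set (Set (AddCircle (1 : ℝ)))) k e := by
  classical
  have hlift : ∀ A ∈ 𝒜, ∃ I, IsArcLift 𝒜 I ∧ arc I = A ∧ I.1 ∈ Ico (0 : ℝ) 1 := by
    intro A hA
    obtain ⟨hcl, hconn, hne⟩ := harc A hA
    obtain ⟨I, h₁, h₂, rfl⟩ := exists_eq_arc hcl hconn hne
    refine ⟨I + (-⌊I.1⌋ : ℤ), IsArcLift.add_intCast ⟨hA, h₁, h₂⟩ _, arc_add_intCast _ _, ?_⟩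
    rw [Prod.fst_add, Prod.fst_intCast, Int.cast_neg, ← sub_eq_add_neg]
    exact ⟨Int.fract_nonneg _, Int.fract_lt_one _⟩
  choose! lift hlift harc_eq hlift_mem using hlift
  -- Lifts start in `[0, 1)` and are shorter than `1`, so their shifts by `-1, 0, 1` cover `[0, 1]`.
  let F := (𝒜 ×ˢ Finset.Icc (-1 : ℤ) 1).image fun p => lift p.1 + p.2
  have hF : (F : Set (ℝ × ℝ)) ⊆ {I | IsArcLift 𝒜 I} := by
    intro I hI
    obtain ⟨⟨A, m⟩, hAm, rfl⟩ := Finset.mem_image.1 hI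
    exact (hlift A (Finset.mem_product.1 hAm).1).add_intCast m
  have hcovF : Icc 0 1 ⊆ ⋃ I ∈ F, Icc I.1 I.2 := by
    intro x hx
    obtain ⟨A, hA, hxA⟩ := mem_iUnion₂.1 (hcover ▸ mem_univ (x : AddCircle (1 : ℝ)))
    rw [← harc_eq A hA] at hxA
    obtain ⟨y, hy, hyx⟩ := hxA
    obtain ⟨m, rfl⟩ := coe_eq_coe_iff.1 hyx.symm
    have h₀ := hlift_mem A hA
    have h₁ := (hlift A hA).snd_sub_fst_lt_one
    have hm : -1 ≤ m ∧ m ≤ 1 := by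
      have h₂ : ((-2 : ℤ) : ℝ) < m := by push_cast; linarith [hx.1, hy.2, h₀.2]
      have h₃ : (m : ℝ) ≤ ((1 : ℤ) : ℝ) := by push_cast; linarith [hx.2, hy.1, h₀.1]
      have := Int.cast_lt.1 h₂
      have := Int.cast_le.1 h₃
      omega
    refine mem_iUnion₂.2 ⟨lift A + m, Finset.mem_image.2 ⟨(A, m), ?_, rfl⟩, ?_⟩
    · simp only [Finset.mem_product, Finset.mem_Icc, hA, true_and]
      exact hm
    · simp only [Prod.fst_add, Prod.snd_add, Prod.fst_intCast, Prod.snd_intCast, mem_Icc]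
      constructor <;> linarith [hy.1, hy.2]
  obtain ⟨L, c, hc, hc0, hcL⟩ := exists_linkedChain F zero_le_one hcovF
  exact ⟨L + 1, (hc.mono hF).exists_isPeriodicChain (by linarith)⟩

end ArcCover

/-- Every finite cover of the circle by closed arcs contains a cyclic
sequence of arcs covering the circle in which consecutive arcs meet and
non-consecutive arcs are disjoint. -/
theorem minimal_arc_cover
    (𝒜 : Finset (Set (AddCircle (1 : ℝ))))
    (harc : ∀ A ∈ 𝒜, IsClosed A ∧ IsConnected A ∧ A ≠ Set.univ)
    (hcover : (⋃ A ∈ 𝒜, A) = Set.univ) :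
    ∃ (k : ℕ), 0 < k ∧ ∃ A : ZMod k → Set (AddCircle (1 : ℝ)),
      (∀ i, A i ∈ 𝒜) ∧ (⋃ i, A i) = Set.univ ∧
      (∀ i j : ZMod k, (A i ∩ A j).Nonempty ↔ (j = i - 1 ∨ j = i ∨ j = i + 1)) := by
  classical
  have hex := ArcCover.exists_isPeriodicChain 𝒜 harc hcover
  obtain ⟨e, he⟩ := Nat.find_spec hex
  have hsep := he.snd_lt_fst_add_two fun j hj e' he' => Nat.find_min hex hj ⟨e', he'⟩
  have : NeZero (Nat.find hex) := ⟨by have := he.two_le; omega⟩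
  refine ⟨Nat.find hex, Nat.pos_of_neZero _, fun i => ArcCover.arc (e i.val),
    fun i => (he.isArcLift _).arc_mem, ?_, fun i j => ?_⟩
  · rw [← ZMod.intCast_surjective.iUnion_comp]
    simp only [he.arc_val_intCast]
    exact he.iUnion_arc_eq_univ
  · obtain ⟨u, rfl⟩ := ZMod.intCast_surjective i
    obtain ⟨v, rfl⟩ := ZMod.intCast_surjective j
    simp only [he.arc_val_intCast]
    rw [he.arc_inter_nonempty_iff hsep, ArcCover.exists_abs_sub_add_mul_le_one_iff]
end

section
/- Let G be a graph with a solution β to its Naji system, and suppose {a, b, c, d} induces a K₄ in G. If a', distinct from a, b, c, d, is a vertex adjacent to b, c, and d but not to a, and every 4-cycle within {a,b,c,d} is odd (with respect to the orientation determined by β), then every 4-cycle within {a',b,c,d} is odd. -/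
/-- `{a,b,c,d}` induces a `K₄` in `G` and, with respect to `β`, each of its three
4-cycles is odd (traversing it one meets an odd number of forward arcs in the
orientation determined by `β`). -/
def IsK4Obstruction {V : Type*} (G : SimpleGraph V) (β : V → V → ZMod 2)
    (a b c d : V) : Prop :=
  G.Adj a b ∧ G.Adj a c ∧ G.Adj a d ∧ G.Adj b c ∧ G.Adj b d ∧ G.Adj c d ∧
  β a b + β b c + β c d + β d a = 1 ∧
  β a b + β b d + β d c + β c a = 1 ∧
  β a c + β c b + β b d + β d a = 1

namespace NajiSolution

variable {V : Type*} {G : SimpleGraph V} {β : V → V → ZMod 2}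

theorem arc_add_arc_eq_of_not_adj (hβ : NajiSolution G β) {a a' y z : V} (hne : a' ≠ a)
    (hna : ¬G.Adj a' a) (hya : G.Adj y a) (hya' : G.Adj y a') (hza : G.Adj z a)
    (hza' : G.Adj z a') :
    β y a' + β a' z = β y a + β a z := by
  obtain ⟨hanti, -, hpath⟩ := hβ
  have hy := hpath y a' a hne hya' hya hna
  have hz := hpath z a' a hne hza' hza hna
  have haz := hanti a z hza.symm
  have ha'z := hanti a' z hza'.symm
  linear_combination (norm := (ring_nf; reduce_mod_char)) hy + hz + haz + ha'z

end NajiSolution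

theorem naji_K4_transitive_general {V : Type*} (G : SimpleGraph V) (β : V → V → ZMod 2)
    (hβ : NajiSolution G β) (a b c d a' : V)
    (hobs : IsK4Obstruction G β a b c d)
    (ha'a : a' ≠ a)
    (hb : G.Adj a' b) (hc : G.Adj a' c) (hd : G.Adj a' d) (hna : ¬G.Adj a' a) :
    IsK4Obstruction G β a' b c d := by
  obtain ⟨hab, hac, had, hbc, hbd, hcd, hbcd, hbdc, hcbd⟩ := hobs
  refine ⟨hb, hc, hd, hbc, hbd, hcd, ?_, ?_, ?_⟩
  · linear_combination hbcd +
      hβ.arc_add_arc_eq_of_not_adj ha'a hna had.symm hd.symm hab.symm hb.symm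
  · linear_combination hbdc +
      hβ.arc_add_arc_eq_of_not_adj ha'a hna hac.symm hc.symm hab.symm hb.symm
  · linear_combination hcbd +
      hβ.arc_add_arc_eq_of_not_adj ha'a hna had.symm hd.symm hac.symm hc.symm

/-- Replacing `a` in a `K₄`-obstruction `{a,b,c,d}` by a vertex `a'` adjacent to
`b`, `c`, `d` but not to `a` yields another `K₄`-obstruction. -/
theorem naji_K4_transitive {V : Type*} (G : SimpleGraph V) (β : V → V → ZMod 2)
    (hβ : NajiSolution G β) (a b c d a' : V)
    (hobs : IsK4Obstruction G β a b c d)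
    (ha'a : a' ≠ a) (ha'b : a' ≠ b) (ha'c : a' ≠ c) (ha'd : a' ≠ d)
    (hb : G.Adj a' b) (hc : G.Adj a' c) (hd : G.Adj a' d) (hna : ¬G.Adj a' a) :
    IsK4Obstruction G β a' b c d :=
  naji_K4_transitive_general G β hβ a b c d a' hobs ha'a hb hc hd hna
end

section
/- Let G be a graph with a Naji-system solution β, and let {a,b,c,d} induce a K₄ in G. Let P be a path in G with distinct ends a and b such that V(P) ∩ {a,b,c,d} = {a,b}, E(P) contains no edge of the K₄, and the union of P with the K₄ is an induced subgraph of G (so internal vertices of P are adjacent to no vertex of {a,b,c,d} except as along P). Then β(c,a) + β(a,d) + β(d,b) + β(b,c) = 0, i.e., the 4-cycle (a,c,b,d,a) is even. -/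
namespace SimpleGraph

variable {V : Type*} (G : SimpleGraph V)

def FarFrom (c d u : V) : Prop :=
  c ≠ u ∧ d ≠ u ∧ ¬G.Adj c u ∧ ¬G.Adj d u

variable {G}

theorem farFrom_of_mem_support {a b c d : V} (p : G.Walk a b)
    (hcP : c ∉ p.support) (hdP : d ∉ p.support)
    (hind : ∀ u ∈ p.support, ∀ v, (v = c ∨ v = d) → G.Adj u v →
      s(u, v) ∈ p.edges ∨ u ∈ ({a, b, c, d} : Set V)) :
    ∀ u ∈ p.support, u ≠ a → u ≠ b → G.FarFrom c d u := by
  intro u hu hua hub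
  have hcu : c ≠ u := fun h => hcP (h ▸ hu)
  have hdu : d ≠ u := fun h => hdP (h ▸ hu)
  have hnadj : ∀ v, (v = c ∨ v = d) → v ∉ p.support → ¬G.Adj v u := by
    intro v hv hvP huv
    rcases hind u hu v hv huv.symm with he | hK
    · exact hvP (p.snd_mem_support_of_mem_edges he)
    · simp only [Set.mem_insert_iff, Set.mem_singleton_iff] at hK
      rcases hK with rfl | rfl | rfl | rfl
      exacts [hua rfl, hub rfl, hcu rfl, hdu rfl]
  exact ⟨hcu, hdu, hnadj c (.inl rfl) hcP, hnadj d (.inr rfl) hdP⟩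

end SimpleGraph

section Naji

variable {V : Type*} {G : SimpleGraph V} {β : V → V → ZMod 2} {c d : V}

theorem NajiSolution.add_eq_of_adj_of_farFrom (hβ : NajiSolution G β) {u v : V}
    (huv : G.Adj u v) (hu : G.FarFrom c d u) (hv : G.FarFrom c d v) :
    β c u + β d u = β c v + β d v := by
  obtain ⟨hcu, hdu, hcu', hdu'⟩ := hu
  obtain ⟨hcv, hdv, hcv', hdv'⟩ := hv
  have hc := hβ.2.1 c u v hcu hcv huv hcu' hcv'
  have hd := hβ.2.1 d u v hdu hdv huv hdu' hdv'
  linear_combination (norm := (ring_nf; reduce_mod_char)) hc + hd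

theorem NajiSolution.add_eq_of_adj_commonNeighbor (hβ : NajiSolution G β) {x y : V}
    (ecd : G.Adj c d) (eyc : G.Adj y c) (eyd : G.Adj y d) (hxy : G.Adj x y)
    (hx : G.FarFrom c d x) :
    β c x + β d x = β y c + β y d := by
  obtain ⟨hcx, hdx, hcx', hdx'⟩ := hx
  have hc := hβ.2.2 y x c hcx.symm hxy.symm eyc (fun h => hcx' h.symm)
  have hd := hβ.2.2 y x d hdx.symm hxy.symm eyd (fun h => hdx' h.symm)
  have hcd := hβ.2.1 x c d hcx.symm hdx.symm ecd (fun h => hcx' h.symm) (fun h => hdx' h.symm)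
  linear_combination (norm := (ring_nf; reduce_mod_char)) hc + hd + hcd

theorem NajiSolution.add_eq_of_walk_to_commonNeighbor (hβ : NajiSolution G β) {w b : V}
    (ecd : G.Adj c d) (ebc : G.Adj b c) (ebd : G.Adj b d) (q : G.Walk w b) (hwb : w ≠ b)
    (hfar : ∀ u ∈ q.support, u ≠ b → G.FarFrom c d u) :
    β c w + β d w = β b c + β b d := by
  induction q with
  | nil => exact absurd rfl hwb
  | @cons w y b hwy q ih =>
    have hw := hfar w q.support.mem_cons_self hwb
    by_cases hyb : y = b
    · subst hyb
      exact hβ.add_eq_of_adj_commonNeighbor ecd ebc ebd hwy hw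
    · have hy := hfar y (List.mem_cons_of_mem _ q.start_mem_support) hyb
      rw [hβ.add_eq_of_adj_of_farFrom hwy hw hy]
      exact ih ebc ebd hyb fun u hu hub => hfar u (List.mem_cons_of_mem _ hu) hub

end Naji

theorem naji_K4_path_even_general {V : Type*} (G : SimpleGraph V) (β : V → V → ZMod 2)
    (hβ : NajiSolution G β) (a b c d : V)
    (eac : G.Adj a c) (ead : G.Adj a d)
    (ebc : G.Adj b c) (ebd : G.Adj b d) (ecd : G.Adj c d)
    (p : G.Walk a b) (hp : p.IsPath) (hlen : 2 ≤ p.length)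
    (hcP : c ∉ p.support) (hdP : d ∉ p.support)
    (hind : ∀ u v : V,
      (u ∈ p.support ∨ u = c ∨ u = d) → (v ∈ p.support ∨ v = c ∨ v = d) →
      (G.Adj u v ↔ (s(u, v) ∈ p.edges ∨
        (u ∈ ({a, b, c, d} : Set V) ∧ v ∈ ({a, b, c, d} : Set V) ∧ u ≠ v)))) :
    β c a + β a d + β d b + β b c = 0 := by
  have hfar := SimpleGraph.farFrom_of_mem_support p hcP hdP fun u hu v hv huv =>
    ((hind u v (.inl hu) (.inr hv)).1 huv).imp_right And.left
  cases p with
  | nil => simp at hlen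
  | @cons _ x _ hax q =>
    obtain ⟨hq, haq⟩ := SimpleGraph.Walk.cons_isPath_iff _ _ |>.1 hp
    have hxb : x ≠ b := by
      rintro rfl
      simp [(SimpleGraph.Walk.isPath_iff_nil.1 hq).length_eq_zero] at hlen
    have hqfar : ∀ u ∈ q.support, u ≠ b → G.FarFrom c d u := fun u hu hub =>
      hfar u (List.mem_cons_of_mem _ hu) (fun h => haq (h ▸ hu)) hub
    have hx_a := hβ.add_eq_of_adj_commonNeighbor ecd eac ead hax.symm
      (hqfar x q.start_mem_support hxb)
    have hx_b := hβ.add_eq_of_walk_to_commonNeighbor ecd ebc ebd q hxb hqfar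
    linear_combination (norm := (ring_nf; reduce_mod_char))
      hβ.1 a c eac + hβ.1 b d ebd + hx_b - hx_a

/-- If `{a,b,c,d}` induces a `K₄`, and `P` is a path from `a` to `b` of length at
least two, meeting the `K₄` only in its ends `a` and `b`, using no edge of the
`K₄`, and such that the union of `P` with the `K₄` is an induced subgraph of `G`,
then the 4-cycle `(a,c,b,d,a)` is even: `β c a + β a d + β d b + β b c = 0`. -/
theorem naji_K4_path_even {V : Type*} (G : SimpleGraph V) (β : V → V → ZMod 2)
    (hβ : NajiSolution G β) (a b c d : V)
    (hab : a ≠ b) (hac : a ≠ c) (had : a ≠ d) (hbc : b ≠ c) (hbd : b ≠ d)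
    (hcd : c ≠ d)
    (eab : G.Adj a b) (eac : G.Adj a c) (ead : G.Adj a d)
    (ebc : G.Adj b c) (ebd : G.Adj b d) (ecd : G.Adj c d)
    (p : G.Walk a b) (hp : p.IsPath) (hlen : 2 ≤ p.length)
    (hcP : c ∉ p.support) (hdP : d ∉ p.support)
    (hind : ∀ u v : V,
      (u ∈ p.support ∨ u = c ∨ u = d) → (v ∈ p.support ∨ v = c ∨ v = d) →
      (G.Adj u v ↔ (s(u, v) ∈ p.edges ∨
        (u ∈ ({a, b, c, d} : Set V) ∧ v ∈ ({a, b, c, d} : Set V) ∧ u ≠ v)))) :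
    β c a + β a d + β d b + β b c = 0 :=
  naji_K4_path_even_general G β hβ a b c d eac ead ebc ebd ecd p hp hlen hcP hdP hind
end

section
/- Let G be a graph with a Naji-system solution β containing an induced claw {x,a,b,c} (center x) which is a Claw-obstruction, i.e., β(a,b)+β(a,c) = β(b,a)+β(b,c) = β(c,a)+β(c,b) = 1. Let X = N(a) ∩ N(b) ∩ N(c). If d is a vertex lying in the same component of G − X as one of a, b, c, and d has at least one neighbour in X, then every vertex of X is a neighbour of d. -/
section

open SimpleGraph

variable {V : Type*} {G : SimpleGraph V} {β : V → V → ZMod 2}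

namespace NajiSolution

theorem eq_of_walk (hβ : NajiSolution G β) {t u v : V} (p : G.Walk u v)
    (hp : ∀ y ∈ p.support, t ≠ y ∧ ¬G.Adj t y) : β t u = β t v := by
  induction p with
  | nil => rfl
  | @cons u w v huw q ih =>
    have hu := hp u (by simp)
    have hw := hp w (by simp)
    rw [← ih (fun y hy => hp y (by simp [hy]))]
    exact CharTwo.add_eq_zero.mp (hβ.2.1 t u w hu.1 hw.1 huw hu.2 hw.2)

theorem claw_sum (hβ : NajiSolution G β) {z u v w : V}
    (huv : u ≠ v) (hvw : v ≠ w) (hwu : w ≠ u)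
    (hzu : G.Adj z u) (hzv : G.Adj z v) (hzw : G.Adj z w)
    (nuv : ¬G.Adj u v) (nvw : ¬G.Adj v w) (nwu : ¬G.Adj w u) :
    β u v + β v u + β v w + β w v + β w u + β u w = 1 := by
  have e₁ := hβ.2.2 z u v huv hzu hzv nuv
  have e₂ := hβ.2.2 z v w hvw hzv hzw nvw
  have e₃ := hβ.2.2 z w u hwu hzw hzu nwu
  grind

end NajiSolution

/-- The three leaves of a Claw-obstruction. -/
structure IsClawObstruction (G : SimpleGraph V) (β : V → V → ZMod 2) (a b c : V) : Prop where
  ne_ab : a ≠ b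
  ne_ac : a ≠ c
  ne_bc : b ≠ c
  not_adj_ab : ¬G.Adj a b
  not_adj_bc : ¬G.Adj b c
  not_adj_ca : ¬G.Adj c a
  sum_a : β a b + β a c = 1
  sum_b : β b a + β b c = 1
  sum_c : β c a + β c b = 1

namespace IsClawObstruction

variable {a b c : V}

theorem swap_left (h : IsClawObstruction G β a b c) : IsClawObstruction G β b a c where
  ne_ab := h.ne_ab.symm
  ne_ac := h.ne_bc
  ne_bc := h.ne_ac
  not_adj_ab := fun hba => h.not_adj_ab hba.symm
  not_adj_bc := fun hac => h.not_adj_ca hac.symm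
  not_adj_ca := fun hcb => h.not_adj_bc hcb.symm
  sum_a := h.sum_b
  sum_b := h.sum_a
  sum_c := (add_comm _ _).trans h.sum_c

theorem swap_right (h : IsClawObstruction G β a b c) : IsClawObstruction G β a c b where
  ne_ab := h.ne_ac
  ne_ac := h.ne_ab
  ne_bc := h.ne_bc.symm
  not_adj_ab := fun hac => h.not_adj_ca hac.symm
  not_adj_bc := fun hcb => h.not_adj_bc hcb.symm
  not_adj_ca := fun hba => h.not_adj_ab hba.symm
  sum_a := (add_comm _ _).trans h.sum_a
  sum_b := h.sum_c
  sum_c := h.sum_b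

/-- On a shortest walk from `a` to `b` avoiding `N(a) ∩ N(b) ∩ N(c)`, `β c` would be constant
by (2) unless the walk meets `N[c]`; a vertex of `N[c]` on it, however, yields a strictly shorter
walk from `c` to `a` or to `b`, except when it is the middle vertex of a walk of length two. -/
theorem exists_mem_support_adj (hβ : NajiSolution G β) (h : IsClawObstruction G β a b c)
    (p : G.Walk a b) : ∃ y ∈ p.support, G.Adj y a ∧ G.Adj y b ∧ G.Adj y c := by
  classical
  induction hn : p.length using Nat.strong_induction_on generalizing a b c with
  | _ n ih =>
  by_contra! hp
  obtain ⟨y, hy, rfl | hcy⟩ : ∃ y ∈ p.support, y = c ∨ G.Adj c y := by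
    by_contra! hfar
    have hca : β c a = β c b := hβ.eq_of_walk p fun y hy => ⟨(hfar y hy).1.symm, (hfar y hy).2⟩
    simpa [hca, CharTwo.add_self_eq_zero] using h.sum_c
  · obtain ⟨z, hz, hza, hzc, hzb⟩ := ih _ (hn ▸ p.length_takeUntil_lt_length hy h.ne_bc.symm)
      h.swap_right (p.takeUntil _ hy) rfl
    exact hp z (p.support_takeUntil_subset_support hy hz) hza hzb hzc
  set q₁ := p.takeUntil y hy
  set q₂ := p.dropUntil y hy
  have hlen : q₁.length + q₂.length = n := by
    rw [← hn, ← p.take_spec hy, Walk.length_append]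
  have hq₁ : q₁.length ≠ 0 := fun h0 =>
    h.not_adj_ca (Walk.eq_of_length_eq_zero h0 ▸ hcy)
  have hq₂ : q₂.length ≠ 0 := fun h0 =>
    h.not_adj_bc (Walk.eq_of_length_eq_zero h0 ▸ hcy.symm)
  by_cases h₁ : q₁.length + 1 < n
  · obtain ⟨z, hz, hza, hzc, hzb⟩ := ih _ h₁ h.swap_right (q₁.concat hcy.symm) (by simp)
    rw [Walk.support_concat, List.mem_append, List.mem_singleton] at hz
    rcases hz with hz | rfl
    · exact hp z (p.support_takeUntil_subset_support hy hz) hza hzb hzc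
    · exact G.irrefl hzc
  by_cases h₂ : q₂.length + 1 < n
  · obtain ⟨z, hz, hzc, hzb, hza⟩ := ih _ h₂ h.swap_right.swap_left.swap_right
      (.cons hcy q₂) (by simp)
    rw [Walk.support_cons, List.mem_cons] at hz
    rcases hz with rfl | hz
    · exact G.irrefl hzc
    · exact hp z (p.support_dropUntil_subset_support hy hz) hza hzb hzc
  have hay : G.Adj a y := Walk.adj_of_length_eq_one (p := q₁) (by omega)
  have hyb : G.Adj y b := Walk.adj_of_length_eq_one (p := q₂) (by omega)
  exact hp y hy hay.symm hyb hcy.symm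

theorem ne_and_not_adj_of_walk (hβ : NajiSolution G β) (h : IsClawObstruction G β a b c)
    {d : V} (p : G.Walk a d) (hp : ∀ y ∈ p.support, ¬(G.Adj y a ∧ G.Adj y b ∧ G.Adj y c)) :
    ∀ y ∈ p.support, b ≠ y ∧ ¬G.Adj b y := by
  classical
  intro y hy
  constructor
  · rintro rfl
    obtain ⟨z, hz, hzX⟩ := h.exists_mem_support_adj hβ (p.takeUntil _ hy)
    exact hp z (p.support_takeUntil_subset_support hy hz) hzX
  · intro hby
    obtain ⟨z, hz, hzX⟩ := h.exists_mem_support_adj hβ ((p.takeUntil _ hy).concat hby.symm)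
    rw [Walk.support_concat, List.mem_append, List.mem_singleton] at hz
    rcases hz with hz | rfl
    · exact hp z (p.support_takeUntil_subset_support hy hz) hzX
    · exact G.irrefl hzX.2.1

theorem adj_of_walk (hβ : NajiSolution G β) (h : IsClawObstruction G β a b c) {d z z' : V}
    (p : G.Walk a d) (hp : ∀ y ∈ p.support, ¬(G.Adj y a ∧ G.Adj y b ∧ G.Adj y c))
    (hz : G.Adj z a ∧ G.Adj z b ∧ G.Adj z c) (hdz : G.Adj d z)
    (hz' : G.Adj z' a ∧ G.Adj z' b ∧ G.Adj z' c) : G.Adj d z' := by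
  by_contra hdz'
  have hb := h.ne_and_not_adj_of_walk hβ p hp
  have hc := h.swap_right.ne_and_not_adj_of_walk hβ p fun y hy hX =>
    hp y hy ⟨hX.1, hX.2.2, hX.2.1⟩
  obtain ⟨hbd, hbd'⟩ := hb d p.end_mem_support
  obtain ⟨hcd, hcd'⟩ := hc d p.end_mem_support
  have hd_ne_z' : d ≠ z' := by
    rintro rfl
    exact hp d p.end_mem_support hz'
  have hβb : β b a = β b d := hβ.eq_of_walk p hb
  have hβc : β c a = β c d := hβ.eq_of_walk p hc
  have hclaw := hβ.claw_sum h.ne_bc hcd hbd.symm hz.2.1 hz.2.2 hdz.symm h.not_adj_bc hcd'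
    fun hdb => hbd' hdb.symm
  have hdb := hβ.2.1 d z' b hd_ne_z' hbd.symm hz'.2.1 hdz' fun hdb => hbd' hdb.symm
  have hdc := hβ.2.1 d z' c hd_ne_z' hcd.symm hz'.2.2 hdz' fun hdc => hcd' hdc.symm
  have := h.sum_b
  have := h.sum_c
  grind

end IsClawObstruction

end

theorem naji_claw_dominating_general {V : Type*} (G : SimpleGraph V) (β : V → V → ZMod 2)
    (hβ : NajiSolution G β) (a b c d : V)
    (hab : a ≠ b) (hac : a ≠ c) (hbc : b ≠ c)
    (nab : ¬G.Adj a b) (nbc : ¬G.Adj b c) (nca : ¬G.Adj c a)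
    (hobs : β a b + β a c = 1 ∧ β b a + β b c = 1 ∧ β c a + β c b = 1)
    (hcomp :
      (∃ p : G.Walk a d, ∀ y ∈ p.support, ¬(G.Adj y a ∧ G.Adj y b ∧ G.Adj y c)) ∨
      (∃ p : G.Walk b d, ∀ y ∈ p.support, ¬(G.Adj y a ∧ G.Adj y b ∧ G.Adj y c)) ∨
      (∃ p : G.Walk c d, ∀ y ∈ p.support, ¬(G.Adj y a ∧ G.Adj y b ∧ G.Adj y c)))
    (hnbr : ∃ x' : V, (G.Adj x' a ∧ G.Adj x' b ∧ G.Adj x' c) ∧ G.Adj d x') :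
    ∀ x' : V, (G.Adj x' a ∧ G.Adj x' b ∧ G.Adj x' c) → G.Adj d x' := by
  intro z' hz'
  obtain ⟨z, hz, hdz⟩ := hnbr
  have h : IsClawObstruction G β a b c :=
    ⟨hab, hac, hbc, nab, nbc, nca, hobs.1, hobs.2.1, hobs.2.2⟩
  rcases hcomp with ⟨p, hp⟩ | ⟨p, hp⟩ | ⟨p, hp⟩
  · exact h.adj_of_walk hβ p hp hz hdz hz'
  · exact h.swap_left.adj_of_walk hβ p (fun y hy hX => hp y hy ⟨hX.2.1, hX.1, hX.2.2⟩)
      ⟨hz.2.1, hz.1, hz.2.2⟩ hdz ⟨hz'.2.1, hz'.1, hz'.2.2⟩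
  · exact h.swap_right.swap_left.adj_of_walk hβ p
      (fun y hy hX => hp y hy ⟨hX.2.1, hX.2.2, hX.1⟩)
      ⟨hz.2.2, hz.1, hz.2.1⟩ hdz ⟨hz'.2.2, hz'.1, hz'.2.1⟩

/-- Let `{x,a,b,c}` be a Claw-obstruction with centre `x`, and let
`X = N(a) ∩ N(b) ∩ N(c)`.  If a vertex `d` lies in the same component of
`G − X` as one of `a`, `b`, `c` (i.e. is joined to one of them by a walk
avoiding `X`) and `d` has a neighbour in `X`, then `X ⊆ N(d)`. -/
theorem naji_claw_dominating {V : Type*} (G : SimpleGraph V) (β : V → V → ZMod 2)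
    (hβ : NajiSolution G β) (x a b c d : V)
    (hab : a ≠ b) (hac : a ≠ c) (hbc : b ≠ c)
    (hxa : G.Adj x a) (hxb : G.Adj x b) (hxc : G.Adj x c)
    (nab : ¬G.Adj a b) (nbc : ¬G.Adj b c) (nca : ¬G.Adj c a)
    (hobs : β a b + β a c = 1 ∧ β b a + β b c = 1 ∧ β c a + β c b = 1)
    (hcomp :
      (∃ p : G.Walk a d, ∀ y ∈ p.support, ¬(G.Adj y a ∧ G.Adj y b ∧ G.Adj y c)) ∨
      (∃ p : G.Walk b d, ∀ y ∈ p.support, ¬(G.Adj y a ∧ G.Adj y b ∧ G.Adj y c)) ∨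
      (∃ p : G.Walk c d, ∀ y ∈ p.support, ¬(G.Adj y a ∧ G.Adj y b ∧ G.Adj y c)))
    (hnbr : ∃ x' : V, (G.Adj x' a ∧ G.Adj x' b ∧ G.Adj x' c) ∧ G.Adj d x') :
    ∀ x' : V, (G.Adj x' a ∧ G.Adj x' b ∧ G.Adj x' c) → G.Adj d x' :=
  naji_claw_dominating_general G β hβ a b c d hab hac hbc nab nbc nca hobs hcomp hnbr
end

section
/- Let G be a graph with a Naji-system solution β, and suppose G contains a Claw-obstruction H = G[{x,a,b,c}] (center x, with β(a,b)+β(a,c) = β(b,a)+β(b,c) = β(c,a)+β(c,b) = 1). Then for each split (A, B) of H, there is a split (A', B') of G with A ⊆ A' and B ⊆ B'. -/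
/-- `(X, Y)` is a split of `G`: a partition of the vertex set into two parts of
size at least two such that the edges between `X` and `Y` form a complete
bipartite graph. -/
def IsSplit {V : Type*} (G : SimpleGraph V) (X Y : Set V) : Prop :=
  X ∪ Y = Set.univ ∧ Disjoint X Y ∧ X.Nontrivial ∧ Y.Nontrivial ∧
  ∀ x₁ ∈ X, ∀ x₂ ∈ X, ∀ y₁ ∈ Y, ∀ y₂ ∈ Y,
    G.Adj x₁ y₁ → G.Adj x₂ y₂ → G.Adj x₁ y₂


/-!
Let `K` be the set of common neighbours of the leaves `a, b, c`, and `S` the set of vertices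
reachable from `b` or `c` by paths that never enter `K`. Along such a path from `b`, the Naji
equations propagate the invariant that the current vertex `v` is non-adjacent to `a` and `c`
with `β a v = β a b` and `β c v = β c b`; with the obstruction equations this forces `v` to be
adjacent to all of `K` or to none of it, according to the value of `β v a + β v c`. Every edge
leaving `S` ends in `K`, and `x, a ∉ S`, so `(Sᶜ, S)` is a split of `G` separating `x, a` from
`b, c`; permuting the leaves covers the three splits of the claw.
-/

section

variable {V : Type*} {G : SimpleGraph V} {β : V → V → ZMod 2}

theorem IsSplit.symm {X Y : Set V} (h : IsSplit G X Y) : IsSplit G Y X := by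
  obtain ⟨hcover, hdisj, hX, hY, hbip⟩ := h
  refine ⟨by rwa [Set.union_comm], hdisj.symm, hY, hX, ?_⟩
  intro y₁ hy₁ y₂ hy₂ x₁ hx₁ x₂ hx₂ h₁ h₂
  exact (hbip x₂ hx₂ x₁ hx₁ y₂ hy₂ y₁ hy₁ h₂.symm h₁.symm).symm

theorem isSplit_compl_of_frontier_subset {S K : Set V} (hS : S.Nontrivial) (hSc : Sᶜ.Nontrivial)
    (hfrontier : ∀ v ∈ S, ∀ w ∉ S, G.Adj v w → w ∈ K)
    (huniform : ∀ v ∈ S, ∀ w₁ ∈ K, ∀ w₂ ∈ K, G.Adj v w₁ → G.Adj v w₂) :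
    IsSplit G Sᶜ S := by
  refine ⟨Set.compl_union_self S, disjoint_compl_left, hSc, hS, ?_⟩
  intro x₁ hx₁ x₂ hx₂ y₁ hy₁ y₂ hy₂ h₁ h₂
  exact (huniform y₂ hy₂ x₂ (hfrontier y₂ hy₂ x₂ hx₂ h₂.symm) x₁
    (hfrontier y₁ hy₁ x₁ hx₁ h₁.symm) h₂.symm).symm

theorem NajiSolution.eq_of_not_adj_of_adj (hβ : NajiSolution G β) {x v w : V}
    (hxv : x ≠ v) (hxw : x ≠ w) (hvw : G.Adj v w) (hnxv : ¬G.Adj x v) (hnxw : ¬G.Adj x w) :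
    β x v = β x w :=
  CharTwo.add_eq_zero.mp (hβ.2.1 x v w hxv hxw hvw hnxv hnxw)

theorem Set.subset_pair_of_union_eq {α : Type*} {A B : Set α} {x p q r : α}
    (hpart : A ∪ B = {x, p, q, r}) (hAB : Disjoint A B) (hB : B.Nontrivial)
    (hxA : x ∈ A) (hpA : p ∈ A) : A ⊆ {x, p} ∧ B ⊆ {q, r} := by
  have hmem : ∀ v, v ∈ A ∪ B → v = x ∨ v = p ∨ v = q ∨ v = r := fun v hv => by
    rwa [hpart] at hv
  have hBqr : B ⊆ {q, r} := fun v hv => by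
    have hvA : v ∉ A := Set.disjoint_right.mp hAB hv
    rcases hmem v (.inr hv) with rfl | rfl | rfl | rfl <;> simp_all
  obtain ⟨s, hs, t, ht, hst⟩ := hB
  have hqB : q ∈ B ∧ r ∈ B := by
    rcases hBqr hs with rfl | rfl <;> rcases hBqr ht with rfl | rfl <;> simp_all
  refine ⟨fun v hv => ?_, hBqr⟩
  have hvB : v ∉ B := Set.disjoint_left.mp hAB hv
  rcases hmem v (.inl hv) with rfl | rfl | rfl | rfl <;> simp_all

structure ClawLeaves (G : SimpleGraph V) (β : V → V → ZMod 2) (a b c : V) : Prop where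
  ne_ab : a ≠ b
  ne_ac : a ≠ c
  ne_bc : b ≠ c
  not_adj_ab : ¬G.Adj a b
  not_adj_bc : ¬G.Adj b c
  not_adj_ca : ¬G.Adj c a
  sum_a : β a b + β a c = 1
  sum_b : β b a + β b c = 1
  sum_c : β c a + β c b = 1

namespace ClawLeaves

variable {a b c : V}

theorem swap₁₂ (h : ClawLeaves G β a b c) : ClawLeaves G β b a c where
  ne_ab := h.ne_ab.symm
  ne_ac := h.ne_bc
  ne_bc := h.ne_ac
  not_adj_ab := fun hba => h.not_adj_ab hba.symm
  not_adj_bc := fun hac => h.not_adj_ca hac.symm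
  not_adj_ca := fun hcb => h.not_adj_bc hcb.symm
  sum_a := h.sum_b
  sum_b := h.sum_a
  sum_c := by rw [add_comm]; exact h.sum_c

theorem swap₂₃ (h : ClawLeaves G β a b c) : ClawLeaves G β a c b where
  ne_ab := h.ne_ac
  ne_ac := h.ne_ab
  ne_bc := h.ne_bc.symm
  not_adj_ab := fun hac => h.not_adj_ca hac.symm
  not_adj_bc := fun hcb => h.not_adj_bc hcb.symm
  not_adj_ca := fun hba => h.not_adj_ab hba.symm
  sum_a := by rw [add_comm]; exact h.sum_a
  sum_b := h.sum_c
  sum_c := h.sum_b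

end ClawLeaves

/-- `v` looks like the leaf `b` from the other two leaves `a` and `c`. -/
def MimicsLeaf (G : SimpleGraph V) (β : V → V → ZMod 2) (a b c v : V) : Prop :=
  ¬G.Adj a v ∧ ¬G.Adj c v ∧ β a v = β a b ∧ β c v = β c b

namespace MimicsLeaf

variable {a b c u v w : V}

theorem leaf (h : ClawLeaves G β a b c) : MimicsLeaf G β a b c b :=
  ⟨h.not_adj_ab, fun hcb => h.not_adj_bc hcb.symm, rfl, rfl⟩

theorem ne_left (h : ClawLeaves G β a b c) (hv : MimicsLeaf G β a b c v) : v ≠ a := by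
  rintro rfl
  have := h.sum_c
  grind [MimicsLeaf]

theorem ne_right (h : ClawLeaves G β a b c) (hv : MimicsLeaf G β a b c v) : v ≠ c := by
  rintro rfl
  have := h.sum_a
  grind [MimicsLeaf]

theorem adj_iff (hβ : NajiSolution G β) (h : ClawLeaves G β a b c)
    (hv : MimicsLeaf G β a b c v) (haw : G.Adj a w) (hbw : G.Adj b w) (hcw : G.Adj c w) :
    G.Adj v w ↔ β v a + β v c = 1 := by
  have hva := ne_left h hv
  have hvc := ne_right h hv
  obtain ⟨hav, hcv, hβav, hβcv⟩ := hv
  constructor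
  · intro hvw
    -- summing four instances of equation (3) at `w` cancels every `β w _`
    have e₁ := hβ.2.2 w v a hva hvw.symm haw.symm fun h => hav h.symm
    have e₂ := hβ.2.2 w v c hvc hvw.symm hcw.symm fun h => hcv h.symm
    have e₃ := hβ.2.2 w a b h.ne_ab haw.symm hbw.symm h.not_adj_ab
    have e₄ := hβ.2.2 w c b h.ne_bc.symm hcw.symm hbw.symm fun h' => h.not_adj_bc h'.symm
    have := h.sum_b
    grind
  · intro hsum
    by_contra hvw
    have hvw' : v ≠ w := by rintro rfl; exact hav haw
    have e₁ := hβ.eq_of_not_adj_of_adj hvw' hva haw.symm hvw fun h => hav h.symm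
    have e₂ := hβ.eq_of_not_adj_of_adj hvw' hvc hcw.symm hvw fun h => hcv h.symm
    grind

theorem of_adj (hβ : NajiSolution G β) (h : ClawLeaves G β a b c)
    (hu : MimicsLeaf G β a b c u) (huv : G.Adj u v)
    (hvK : ¬(G.Adj a v ∧ G.Adj b v ∧ G.Adj c v)) : MimicsLeaf G β a b c v := by
  have hua := ne_left h hu
  have huc := ne_right h hu
  obtain ⟨hau, hcu, hβau, hβcu⟩ := hu
  have hva : v ≠ a := by rintro rfl; exact hau huv.symm
  have hvc : v ≠ c := by rintro rfl; exact hcu huv.symm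
  have hcv_of_hav : G.Adj a v → ¬G.Adj c v := by
    intro hav hcv
    refine hvK ⟨hav, by_contra fun hbv => ?_, hcv⟩
    have hvb : v ≠ b := by rintro rfl; exact h.not_adj_ab hav
    have e₁ := hβ.eq_of_not_adj_of_adj hvb.symm h.ne_ab.symm hav.symm hbv
      fun hba => h.not_adj_ab hba.symm
    have e₂ := hβ.eq_of_not_adj_of_adj hvb.symm h.ne_bc hcv.symm hbv h.not_adj_bc
    have := h.sum_b
    grind
  have hav : ¬G.Adj a v := by
    intro hav
    have hcv := hcv_of_hav hav
    have e₁ := hβ.eq_of_not_adj_of_adj huc.symm hvc.symm huv hcu hcv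
    have e₂ := hβ.eq_of_not_adj_of_adj hvc.symm h.ne_ac.symm hav.symm hcv h.not_adj_ca
    have := h.sum_c
    grind
  have hcv : ¬G.Adj c v := by
    intro hcv
    have e₁ := hβ.eq_of_not_adj_of_adj hua.symm hva.symm huv hau hav
    have e₂ := hβ.eq_of_not_adj_of_adj hva.symm h.ne_ac hcv.symm hav
      fun hac => h.not_adj_ca hac.symm
    have := h.sum_a
    grind
  exact ⟨hav, hcv, hβau ▸ hβ.eq_of_not_adj_of_adj hua.symm hva.symm huv hau hav |>.symm,
    hβcu ▸ hβ.eq_of_not_adj_of_adj huc.symm hvc.symm huv hcu hcv |>.symm⟩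

end MimicsLeaf

theorem exists_isSplit_of_claw (hβ : NajiSolution G β) {x a b c : V} (h : ClawLeaves G β a b c)
    (hxa : G.Adj x a) :
    ∃ A' B' : Set V, IsSplit G A' B' ∧ x ∈ A' ∧ a ∈ A' ∧ b ∈ B' ∧ c ∈ B' := by
  set K : Set V := {w | G.Adj a w ∧ G.Adj b w ∧ G.Adj c w}
  let step : V → V → Prop := fun u v => G.Adj u v ∧ v ∉ K
  set S : Set V := {v | Relation.ReflTransGen step b v ∨ Relation.ReflTransGen step c v}
  have mimics_b : ∀ v, Relation.ReflTransGen step b v → MimicsLeaf G β a b c v := by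
    intro v hv
    induction hv with
    | refl => exact .leaf h
    | tail _ huv ih => exact ih.of_adj hβ h huv.1 huv.2
  have mimics_c : ∀ v, Relation.ReflTransGen step c v → MimicsLeaf G β a c b v := by
    intro v hv
    induction hv with
    | refl => exact .leaf h.swap₂₃
    | tail _ huv ih =>
      exact ih.of_adj hβ h.swap₂₃ huv.1 fun hK => huv.2 ⟨hK.1, hK.2.2, hK.2.1⟩
  have hxS : x ∉ S := by
    rintro (hx | hx)
    · exact (mimics_b x hx).1 hxa.symm
    · exact (mimics_c x hx).1 hxa.symm
  have haS : a ∉ S := by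
    rintro (ha | ha)
    · exact (mimics_b a ha).ne_left h rfl
    · exact (mimics_c a ha).ne_left h.swap₂₃ rfl
  have hfrontier : ∀ v ∈ S, ∀ w ∉ S, G.Adj v w → w ∈ K := by
    intro v hv w hwS hvw
    by_contra hwK
    rcases hv with hv | hv
    · exact hwS (.inl (hv.tail ⟨hvw, hwK⟩))
    · exact hwS (.inr (hv.tail ⟨hvw, hwK⟩))
  have huniform : ∀ v ∈ S, ∀ w₁ ∈ K, ∀ w₂ ∈ K, G.Adj v w₁ → G.Adj v w₂ := by
    rintro v (hv | hv) w₁ ⟨ha₁, hb₁, hc₁⟩ w₂ ⟨ha₂, hb₂, hc₂⟩ hvw₁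
    · exact ((mimics_b v hv).adj_iff hβ h ha₂ hb₂ hc₂).mpr
        (((mimics_b v hv).adj_iff hβ h ha₁ hb₁ hc₁).mp hvw₁)
    · exact ((mimics_c v hv).adj_iff hβ h.swap₂₃ ha₂ hc₂ hb₂).mpr
        (((mimics_c v hv).adj_iff hβ h.swap₂₃ ha₁ hc₁ hb₁).mp hvw₁)
  exact ⟨Sᶜ, S, isSplit_compl_of_frontier_subset ⟨b, .inl .refl, c, .inr .refl, h.ne_bc⟩
    ⟨x, hxS, a, haS, hxa.ne⟩ hfrontier huniform, hxS, haS, .inl .refl, .inr .refl⟩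

theorem exists_isSplit_superset_of_claw (hβ : NajiSolution G β) {x p q r : V}
    (h : ClawLeaves G β p q r) (hxp : G.Adj x p)
    {A B : Set V} (hpart : A ∪ B = {x, p, q, r}) (hAB : Disjoint A B) (hB : B.Nontrivial)
    (hxA : x ∈ A) (hpA : p ∈ A) :
    ∃ A' B' : Set V, IsSplit G A' B' ∧ A ⊆ A' ∧ B ⊆ B' := by
  obtain ⟨hA, hB⟩ := Set.subset_pair_of_union_eq hpart hAB hB hxA hpA
  obtain ⟨A', B', hsplit, hxA', hpA', hqB', hrB'⟩ := exists_isSplit_of_claw hβ h hxp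
  exact ⟨A', B', hsplit, hA.trans (Set.pair_subset hxA' hpA'),
    hB.trans (Set.pair_subset hqB' hrB')⟩

end

theorem naji_claw_split_general {V : Type*} (G : SimpleGraph V) (β : V → V → ZMod 2)
    (hβ : NajiSolution G β) (x a b c : V)
    (hab : a ≠ b) (hac : a ≠ c) (hbc : b ≠ c)
    (hxa : G.Adj x a) (hxb : G.Adj x b) (hxc : G.Adj x c)
    (nab : ¬G.Adj a b) (nbc : ¬G.Adj b c) (nca : ¬G.Adj c a)
    (hobs : β a b + β a c = 1 ∧ β b a + β b c = 1 ∧ β c a + β c b = 1)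
    (A B : Set V)
    (hpart : A ∪ B = ({x, a, b, c} : Set V)) (hAB : Disjoint A B)
    (hA : A.Nontrivial) (hB : B.Nontrivial) :
    ∃ A' B' : Set V, IsSplit G A' B' ∧ A ⊆ A' ∧ B ⊆ B' := by
  have h : ClawLeaves G β a b c :=
    ⟨hab, hac, hbc, nab, nbc, nca, hobs.1, hobs.2.1, hobs.2.2⟩
  wlog hxA : x ∈ A generalizing A B
  · have hxB : x ∈ B := by
      have hx : x ∈ A ∪ B := by simp [hpart]
      exact hx.resolve_left hxA
    obtain ⟨A', B', hsplit, hBA', hAB'⟩ :=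
      this B A (by rwa [Set.union_comm]) hAB.symm hB hA hxB
    exact ⟨B', A', hsplit.symm, hAB', hBA'⟩
  obtain ⟨p, hpA, hpx⟩ := hA.exists_ne x
  have hp : p = a ∨ p = b ∨ p = c := by
    have : p ∈ A ∪ B := .inl hpA
    rw [hpart] at this
    exact this.resolve_left hpx
  rcases hp with rfl | rfl | rfl
  · exact exists_isSplit_superset_of_claw hβ h hxa hpart hAB hB hxA hpA
  · exact exists_isSplit_superset_of_claw hβ h.swap₁₂ hxb
      (by rw [hpart, Set.insert_comm p]) hAB hB hxA hpA
  · exact exists_isSplit_superset_of_claw hβ h.swap₂₃.swap₁₂ hxc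
      (by rw [hpart, Set.pair_comm b p, Set.insert_comm a p]) hAB hB hxA hpA

/-- Every split of a Claw-obstruction `H = G[{x,a,b,c}]` induces a split of `G`. -/
theorem naji_claw_split {V : Type*} (G : SimpleGraph V) (β : V → V → ZMod 2)
    (hβ : NajiSolution G β) (x a b c : V)
    (hab : a ≠ b) (hac : a ≠ c) (hbc : b ≠ c)
    (hxa : G.Adj x a) (hxb : G.Adj x b) (hxc : G.Adj x c)
    (nab : ¬G.Adj a b) (nbc : ¬G.Adj b c) (nca : ¬G.Adj c a)
    (hobs : β a b + β a c = 1 ∧ β b a + β b c = 1 ∧ β c a + β c b = 1)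
    (A B : Set V)
    (hpart : A ∪ B = ({x, a, b, c} : Set V)) (hAB : Disjoint A B)
    (hA : A.Nontrivial) (hB : B.Nontrivial)
    (hbip : ∀ u₁ ∈ A, ∀ u₂ ∈ A, ∀ w₁ ∈ B, ∀ w₂ ∈ B,
      G.Adj u₁ w₁ → G.Adj u₂ w₂ → G.Adj u₁ w₂) :
    ∃ A' B' : Set V, IsSplit G A' B' ∧ A ⊆ A' ∧ B ⊆ B' :=
  naji_claw_split_general G β hβ x a b c hab hac hbc hxa hxb hxc nab nbc nca hobs A B hpart hAB hA
    hB
end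

section
/- Let G be a graph with a Naji-system solution β, and suppose {a,b,c,d} induces a K₄ which is a K₄-obstruction, i.e., each of the three 4-cycles on {a,b,c,d} is odd with respect to β. Then for each split (A, B) of the induced K₄, there is a split (A', B') of G with A ⊆ A' and B ⊆ B'. -/
/-!
Call `x` of type `k ∈ K = {a, b, c, d}` (`LooksLike β K k x`) if the vertices of `K \ {k}` see `x`
as they see `k`: `s ↦ β s x + β s k` is constant on `K \ {k}`. Oddness of the three 4-cycles says
precisely that the two vertices off a pair `k, k'` see `k` and `k'` differently. Hence types are
unique, and since each type accounts for two of the eight functions `K → 𝔽₂` modulo constants,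
every vertex has one.

The Naji equations transport "seen alike" along edges and non-edges of `G`. So a vertex of type
`k` is adjacent to all or none of `K \ {k}`, the ends of an edge with different types are both of
the first kind, and two vertices of the first kind with different types are adjacent. Thus for a
split `(A, B)` of `K`, the vertices with type in `A` and those with type in `B` split `G`.
-/

section

open Set

variable {V : Type*} {G : SimpleGraph V} {β : V → V → ZMod 2} {K S T : Set V}
  {a b c d k k' s t u v x y : V}

def SeesAlike (β : V → V → ZMod 2) (S : Set V) (x y : V) : Prop :=
  ∀ s ∈ S, ∀ t ∈ S, β s x + β t x = β s y + β t y

def LooksLike (β : V → V → ZMod 2) (K : Set V) (k x : V) : Prop :=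
  SeesAlike β (K \ {k}) x k

namespace SeesAlike

theorem refl : SeesAlike β S x x := fun _ _ _ _ => rfl

theorem symm (h : SeesAlike β S x y) : SeesAlike β S y x :=
  fun s hs t ht => (h s hs t ht).symm

theorem trans (h : SeesAlike β S x y) (h' : SeesAlike β S y u) : SeesAlike β S x u :=
  fun s hs t ht => (h s hs t ht).trans (h' s hs t ht)

theorem mono (h : SeesAlike β S x y) (hTS : T ⊆ S) : SeesAlike β T x y :=
  fun s hs t ht => h s (hTS hs) t (hTS ht)

end SeesAlike

theorem seesAlike_pair (h : β s x + β t x = β s y + β t y) : SeesAlike β {s, t} x y := by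
  rintro p (rfl | rfl) q (rfl | rfl) <;> grind

theorem seesAlike_triple (h₁ : β s x + β t x = β s y + β t y)
    (h₂ : β s x + β u x = β s y + β u y) : SeesAlike β {s, t, u} x y := by
  rintro p (rfl | rfl | rfl) q (rfl | rfl | rfl) <;> grind

theorem looksLike_self : LooksLike β K k k := SeesAlike.refl

theorem ZMod.eq_add_one_of_ne_mod_two : ∀ {a b : ZMod 2}, a ≠ b → a = b + 1 := by decide

theorem seesAlike_triple_cases (hab : β c a + β d a ≠ β c b + β d b)
    (hac : β b a + β d a ≠ β b c + β d c) (had : β b a + β c a ≠ β b d + β c d)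
    (hbc : β a b + β d b ≠ β a c + β d c) (hbd : β a b + β c b ≠ β a d + β c d)
    (hcd : β a c + β b c ≠ β a d + β b d) :
    SeesAlike β {b, c, d} x a ∨ SeesAlike β {a, c, d} x b ∨ SeesAlike β {a, b, d} x c ∨
      SeesAlike β {a, b, c} x d := by
  replace hab := ZMod.eq_add_one_of_ne_mod_two hab
  replace hac := ZMod.eq_add_one_of_ne_mod_two hac
  replace had := ZMod.eq_add_one_of_ne_mod_two had
  replace hbc := ZMod.eq_add_one_of_ne_mod_two hbc
  replace hbd := ZMod.eq_add_one_of_ne_mod_two hbd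
  replace hcd := ZMod.eq_add_one_of_ne_mod_two hcd
  by_cases hp : β c x + β d x = β c a + β d a
  · by_cases hq : β b x + β c x = β b a + β c a
    · exact .inl (seesAlike_triple hq (by grind))
    replace hq := ZMod.eq_add_one_of_ne_mod_two hq
    by_cases hr : β a x + β c x = β a b + β c b
    · exact .inr (.inr (.inl (seesAlike_triple (by grind) (by grind))))
    replace hr := ZMod.eq_add_one_of_ne_mod_two hr
    exact .inr (.inr (.inr (seesAlike_triple (by grind) (by grind))))
  · replace hp := ZMod.eq_add_one_of_ne_mod_two hp
    by_cases hr : β a x + β c x = β a b + β c b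
    · exact .inr (.inl (seesAlike_triple hr (by grind)))
    replace hr := ZMod.eq_add_one_of_ne_mod_two hr
    by_cases hq : β b x + β c x = β b a + β c a
    · exact .inr (.inr (.inl (seesAlike_triple (by grind) (by grind))))
    replace hq := ZMod.eq_add_one_of_ne_mod_two hq
    exact .inr (.inr (.inr (seesAlike_triple (by grind) (by grind))))


namespace NajiSolution

theorem seesAlike_of_common_neighbors (hβ : NajiSolution G β) (hxy : x ≠ y) (hnadj : ¬G.Adj x y)
    (hS : ∀ s ∈ S, G.Adj s x ∧ G.Adj s y) : SeesAlike β S x y := by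
  intro s hs t ht
  have hs' := hβ.2.2 s x y hxy (hS s hs).1 (hS s hs).2 hnadj
  have ht' := hβ.2.2 t x y hxy (hS t ht).1 (hS t ht).2 hnadj
  grind

theorem seesAlike_of_common_non_neighbors (hβ : NajiSolution G β)
    (hxy : G.Adj x y)
    (hS : ∀ s ∈ S, s ≠ x ∧ ¬G.Adj s x ∧ s ≠ y ∧ ¬G.Adj s y) : SeesAlike β S x y := by
  have key : ∀ s ∈ S, β s x = β s y := fun s hs => by
    obtain ⟨hsx, hsx', hsy, hsy'⟩ := hS s hs
    grind [hβ.2.1 s x y hsx hsy hxy hsx' hsy']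
  intro s hs t ht
  rw [key s hs, key t ht]

theorem seesAlike_of_isClique (hβ : NajiSolution G β) (hxy : G.Adj x y) (hS : G.IsClique S)
    (hSx : ∀ s ∈ S, s ≠ x ∧ ¬G.Adj x s) (hSy : ∀ s ∈ S, G.Adj y s) : SeesAlike β S x y := by
  intro s hs t ht
  rcases eq_or_ne s t with rfl | hst
  · grind
  obtain ⟨hsx, hxs⟩ := hSx s hs
  obtain ⟨htx, hxt⟩ := hSx t ht
  have e₁ := hβ.2.2 y x s hsx.symm hxy.symm (hSy s hs) hxs
  have e₂ := hβ.2.2 y x t htx.symm hxy.symm (hSy t ht) hxt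
  have e₃ := hβ.2.1 x s t hsx.symm htx.symm (hS hs ht hst) hxs hxt
  have e₄ := hβ.1 y s (hSy s hs)
  have e₅ := hβ.1 y t (hSy t ht)
  grind

theorem not_seesAlike_of_odd_cycle (hβ : NajiSolution G β) (hks : G.Adj k s) (hk't : G.Adj k' t)
    (hodd : β k s + β s k' + β k' t + β t k = 1) (hs : s ∈ S) (ht : t ∈ S) :
    ¬SeesAlike β S k k' := by
  intro h
  have e := h s hs t ht
  have e₁ := hβ.1 k s hks
  have e₂ := hβ.1 k' t hk't
  grind

end NajiSolution

theorem eq_of_ncard_eq_four (hK : K.ncard = 4) (ha : a ∈ K) (hb : b ∈ K) (hc : c ∈ K)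
    (hd : d ∈ K) (hab : a ≠ b) (hac : a ≠ c) (had : a ≠ d) (hbc : b ≠ c) (hbd : b ≠ d)
    (hcd : c ≠ d) : K = {a, b, c, d} := by
  refine (Set.eq_of_subset_of_ncard_le ?_ ?_ (Set.finite_of_ncard_ne_zero (by omega))).symm
  · simp [insert_subset_iff, *]
  · rw [hK, Set.ncard_insert_of_notMem, Set.ncard_insert_of_notMem, Set.ncard_pair hcd] <;>
      simp [*]

structure IsOddK4 (G : SimpleGraph V) (β : V → V → ZMod 2) (K : Set V) : Prop where
  ncard_eq : K.ncard = 4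
  isClique : G.IsClique K
  not_seesAlike : ∀ ⦃k⦄, k ∈ K → ∀ ⦃k'⦄, k' ∈ K → k ≠ k' → ¬SeesAlike β (K \ {k, k'}) k k'

namespace IsOddK4

theorem not_seesAlike_of_looksLike (hK : IsOddK4 G β K) (hk : k ∈ K) (hk' : k' ∈ K)
    (hne : k ≠ k') (hx : LooksLike β K k x) (hy : LooksLike β K k' y) :
    ¬SeesAlike β (K \ {k, k'}) x y := fun h =>
  hK.not_seesAlike hk hk' hne <|
    ((hx.mono (sdiff_subset_sdiff_right (by simp))).symm.trans h).trans
      (hy.mono (sdiff_subset_sdiff_right (by simp)))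

theorem eq_of_looksLike (hK : IsOddK4 G β K) (hk : k ∈ K) (hk' : k' ∈ K)
    (hx : LooksLike β K k x) (hx' : LooksLike β K k' x) : k = k' := by
  by_contra hne
  exact hK.not_seesAlike_of_looksLike hk hk' hne hx hx' SeesAlike.refl

theorem eq_of_mem_of_looksLike (hK : IsOddK4 G β K) (hk : k ∈ K) (hx : x ∈ K)
    (h : LooksLike β K k x) : x = k :=
  hK.eq_of_looksLike hx hk looksLike_self h

theorem not_forall_adj_of_not_adj (hβ : NajiSolution G β) (hK : IsOddK4 G β K) (hs : s ∈ K)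
    (ht : t ∈ K) (hst : s ≠ t) (hxs : ¬G.Adj x s) (hxt : ¬G.Adj x t) :
    ¬∀ z ∈ K \ {s, t}, G.Adj x z := by
  intro hx
  have hxs' : x ≠ s := by rintro rfl; exact hxt (hK.isClique hs ht hst)
  have hxt' : x ≠ t := by rintro rfl; exact hxs (hK.isClique ht hs hst.symm)
  have hseen : ∀ {k}, k ∈ K → ¬G.Adj x k → x ≠ k → k ∈ ({s, t} : Set V) →
      SeesAlike β (K \ {s, t}) x k := fun hk hxk hxk' hkst =>
    hβ.seesAlike_of_common_neighbors hxk' hxk fun z hz =>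
      ⟨(hx z hz).symm, hK.isClique hz.1 hk fun h => hz.2 (h ▸ hkst)⟩
  exact hK.not_seesAlike hs ht hst
    ((hseen hs hxs hxs' (by simp)).symm.trans (hseen ht hxt hxt' (by simp)))

theorem looksLike_or_looksLike_of_adj_of_not_adj (hβ : NajiSolution G β) (hK : IsOddK4 G β K)
    (hk : k ∈ K) (hk' : k' ∈ K) (hxk : G.Adj x k) (hxk' : ¬G.Adj x k') :
    LooksLike β K k x ∨ LooksLike β K k' x := by
  by_cases hx : x = k'
  · exact Or.inr (hx ▸ looksLike_self)
  by_cases hfull : ∀ s ∈ K \ {k'}, G.Adj x s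
  · exact Or.inr <| hβ.seesAlike_of_common_neighbors hx hxk' fun s hs =>
      ⟨(hfull s hs).symm, hK.isClique hs.1 hk' hs.2⟩
  by_cases hempty : ∀ s ∈ K \ {k}, ¬G.Adj x s
  · refine Or.inl <| hβ.seesAlike_of_isClique hxk (hK.isClique.subset sdiff_subset)
      (fun s hs => ⟨?_, hempty s hs⟩) fun s hs => hK.isClique hk hs.1 (Ne.symm hs.2)
    rintro rfl
    exact hxk' (hK.isClique hs.1 hk' hx)
  push Not at hfull hempty
  obtain ⟨s, ⟨hs, hsk'⟩, hxs⟩ := hfull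
  obtain ⟨t, ⟨ht, htk⟩, hxt⟩ := hempty
  have hKeq : K = {k, t, s, k'} := eq_of_ncard_eq_four hK.ncard_eq hk ht hs hk' (Ne.symm htk)
    (by rintro rfl; exact hxs hxk) (by rintro rfl; exact hxk' hxk) (by rintro rfl; exact hxs hxt)
    (by rintro rfl; exact hxk' hxt) hsk'
  refine (hK.not_forall_adj_of_not_adj hβ hs hk' hsk' hxs hxk' fun z hz => ?_).elim
  have hz' := hz.1
  rw [hKeq] at hz'
  rcases hz' with rfl | rfl | rfl | rfl
  · exact hxk
  · exact hxt
  · exact (hz.2 (by simp)).elim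
  · exact (hz.2 (by simp)).elim

theorem forall_adj_or_forall_not_adj (hβ : NajiSolution G β) (hK : IsOddK4 G β K)
    (hk : k ∈ K) (hx : LooksLike β K k x) :
    (∀ s ∈ K \ {k}, G.Adj x s) ∨ ∀ s ∈ K \ {k}, ¬G.Adj x s := by
  by_contra h
  push Not at h
  obtain ⟨⟨s, ⟨hs, hsk⟩, hxs⟩, ⟨t, ⟨ht, htk⟩, hxt⟩⟩ := h
  rcases hK.looksLike_or_looksLike_of_adj_of_not_adj hβ ht hs hxt hxs with h | h
  · exact htk (hK.eq_of_looksLike ht hk h hx)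
  · exact hsk (hK.eq_of_looksLike hs hk h hx)


theorem forall_adj_of_adj (hβ : NajiSolution G β) (hK : IsOddK4 G β K) (hk : k ∈ K)
    (hk' : k' ∈ K) (hne : k ≠ k') (hu : LooksLike β K k u) (hv : LooksLike β K k' v)
    (huv : G.Adj u v) : ∀ s ∈ K \ {k}, G.Adj u s := by
  refine (hK.forall_adj_or_forall_not_adj hβ hk hu).resolve_right fun hu' => ?_
  have hS : ∀ s ∈ K \ {k, k'}, s ≠ u ∧ ¬G.Adj u s := fun s hs =>
    ⟨fun h => hs.2 (.inl (hK.eq_of_mem_of_looksLike hk hs.1 (h ▸ hu))),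
      hu' s ⟨hs.1, fun h => hs.2 (.inl h)⟩⟩
  refine hK.not_seesAlike_of_looksLike hk hk' hne hu hv ?_
  rcases hK.forall_adj_or_forall_not_adj hβ hk' hv with hv' | hv'
  · exact hβ.seesAlike_of_isClique huv (hK.isClique.subset sdiff_subset) hS
      fun s hs => hv' s ⟨hs.1, fun h => hs.2 (.inr h)⟩
  · refine hβ.seesAlike_of_common_non_neighbors huv fun s hs => ⟨(hS s hs).1,
      fun h => (hS s hs).2 h.symm, ?_, fun h => hv' s ⟨hs.1, fun h => hs.2 (.inr h)⟩ h.symm⟩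
    rintro rfl
    exact hs.2 (.inr (hK.eq_of_mem_of_looksLike hk' hs.1 hv))

theorem adj_of_forall_adj (hβ : NajiSolution G β) (hK : IsOddK4 G β K) (hk : k ∈ K)
    (hk' : k' ∈ K) (hne : k ≠ k') (hu : LooksLike β K k u) (hv : LooksLike β K k' v)
    (hu' : ∀ s ∈ K \ {k}, G.Adj u s) (hv' : ∀ s ∈ K \ {k'}, G.Adj v s) : G.Adj u v := by
  by_contra huv
  have hne' : u ≠ v := by
    rintro rfl
    exact hne (hK.eq_of_looksLike hk hk' hu hv)
  exact hK.not_seesAlike_of_looksLike hk hk' hne hu hv <|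
    hβ.seesAlike_of_common_neighbors hne' huv fun s hs =>
      ⟨(hu' s ⟨hs.1, fun h => hs.2 (.inl h)⟩).symm, (hv' s ⟨hs.1, fun h => hs.2 (.inr h)⟩).symm⟩

theorem exists_looksLike (hK : IsOddK4 G β K) (x : V) : ∃ k ∈ K, LooksLike β K k x := by
  obtain ⟨a, T, haT, rfl, hT⟩ :=
    (ncard_eq_succ (finite_of_ncard_ne_zero (by rw [hK.ncard_eq]; norm_num))).1 hK.ncard_eq
  obtain ⟨b, c, d, hbc, hbd, hcd, rfl⟩ := ncard_eq_three.1 hT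
  simp only [mem_insert_iff, mem_singleton_iff, not_or] at haT
  obtain ⟨hab, hac, had⟩ := haT
  have hodd : ∀ {k k' s t}, k ∈ ({a, b, c, d} : Set V) → k' ∈ ({a, b, c, d} : Set V) → k ≠ k' →
      {a, b, c, d} \ {k, k'} ⊆ ({s, t} : Set V) → β s k + β t k ≠ β s k' + β t k' :=
    fun hk hk' hne hsub h => hK.not_seesAlike hk hk' hne ((seesAlike_pair h).mono hsub)
  rcases seesAlike_triple_cases (x := x) (hodd (by simp) (by simp) hab (by intro z; simp; tauto))
      (hodd (by simp) (by simp) hac (by intro z; simp; tauto))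
      (hodd (by simp) (by simp) had (by intro z; simp; tauto))
      (hodd (by simp) (by simp) hbc (by intro z; simp; tauto))
      (hodd (by simp) (by simp) hbd (by intro z; simp; tauto))
      (hodd (by simp) (by simp) hcd (by intro z; simp; tauto)) with h | h | h | h
  all_goals exact ⟨_, by simp, h.mono (by intro z; simp; tauto)⟩

theorem isSplit {A B : Set V} (hβ : NajiSolution G β) (hK : IsOddK4 G β K) (hAB : A ∪ B = K)
    (hdisj : Disjoint A B) (hA : A.Nontrivial) (hB : B.Nontrivial) :
    IsSplit G {x | ∃ k ∈ A, LooksLike β K k x} {x | ∃ k ∈ B, LooksLike β K k x} := by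
  have hAK : A ⊆ K := hAB ▸ subset_union_left
  have hBK : B ⊆ K := hAB ▸ subset_union_right
  have hne : ∀ {k k'}, k ∈ A → k' ∈ B → k ≠ k' := fun hk hk' h =>
    disjoint_left.1 hdisj hk (h ▸ hk')
  refine ⟨?_, ?_, hA.mono fun k hk => ⟨k, hk, looksLike_self⟩,
    hB.mono fun k hk => ⟨k, hk, looksLike_self⟩, ?_⟩
  · refine eq_univ_of_forall fun x => ?_
    obtain ⟨k, hk, hx⟩ := hK.exists_looksLike x
    rw [← hAB] at hk
    rcases hk with hk | hk
    exacts [.inl ⟨k, hk, hx⟩, .inr ⟨k, hk, hx⟩]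
  · rw [disjoint_left]
    rintro x ⟨k, hk, hx⟩ ⟨k', hk', hx'⟩
    exact hne hk hk' (hK.eq_of_looksLike (hAK hk) (hBK hk') hx hx')
  · rintro x₁ ⟨k₁, hk₁, hx₁⟩ x₂ ⟨k₂, hk₂, hx₂⟩ y₁ ⟨l₁, hl₁, hy₁⟩ y₂ ⟨l₂, hl₂, hy₂⟩ h₁ h₂
    exact hK.adj_of_forall_adj hβ (hAK hk₁) (hBK hl₂) (hne hk₁ hl₂) hx₁ hy₂
      (hK.forall_adj_of_adj hβ (hAK hk₁) (hBK hl₁) (hne hk₁ hl₁) hx₁ hy₁ h₁)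
      (hK.forall_adj_of_adj hβ (hBK hl₂) (hAK hk₂) (hne hk₂ hl₂).symm hy₂ hx₂ h₂.symm)

end IsOddK4

theorem IsK4Obstruction.isOddK4 (hβ : NajiSolution G β) (hobs : IsK4Obstruction G β a b c d) :
    IsOddK4 G β {a, b, c, d} := by
  obtain ⟨hab, hac, had, hbc, hbd, hcd, hC₁, hC₂, hC₃⟩ := hobs
  refine ⟨?_, ?_, ?_⟩
  · rw [ncard_insert_of_notMem, ncard_insert_of_notMem, ncard_pair hcd.ne] <;>
      simp [hab.ne, hac.ne, had.ne, hbc.ne, hbd.ne]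
  · simp [SimpleGraph.isClique_insert, hab, hac, had, hbc, hbd, hcd, hab.ne, hac.ne, had.ne,
      hbc.ne, hbd.ne, hcd.ne]
  have cyc : ∀ {k s k' t}, s ∈ ({a, b, c, d} : Set V) → t ∈ ({a, b, c, d} : Set V) →
      G.Adj k s → G.Adj s k' → G.Adj k' t → G.Adj t k → β k s + β s k' + β k' t + β t k = 1 →
      ¬SeesAlike β ({a, b, c, d} \ {k, k'}) k k' := fun hs ht hks hsk' hk't htk hodd =>
    hβ.not_seesAlike_of_odd_cycle hks hk't hodd ⟨hs, by simp [hks.ne', hsk'.ne]⟩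
      ⟨ht, by simp [htk.ne, hk't.ne']⟩
  intro k hk k' hk' hkk'
  -- `k` and `k'` are opposite corners of one of the three 4-cycles, traversed from `k`
  rcases hk with hk | hk | hk | hk <;> subst k <;> rcases hk' with hk' | hk' | hk' | hk' <;>
    subst k' <;> first | exact absurd rfl hkk' | skip
  · exact cyc (by simp) (by simp) hac hbc.symm hbd had.symm hC₃
  · exact cyc (by simp) (by simp) hab hbc hcd had.symm hC₁
  · exact cyc (by simp) (by simp) hab hbd hcd.symm hac.symm hC₂
  · exact cyc (by simp) (by simp) hbd had.symm hac hbc.symm (by linear_combination hC₃)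
  · exact cyc (by simp) (by simp) hbd hcd.symm hac.symm hab (by linear_combination hC₂)
  · exact cyc (by simp) (by simp) hbc hcd had.symm hab (by linear_combination hC₁)
  · exact cyc (by simp) (by simp) hcd had.symm hab hbc (by linear_combination hC₁)
  · exact cyc (by simp) (by simp) hac.symm hab hbd hcd.symm (by linear_combination hC₂)
  · exact cyc (by simp) (by simp) hbc.symm hbd had.symm hac (by linear_combination hC₃)
  · exact cyc (by simp) (by simp) hcd.symm hac.symm hab hbd (by linear_combination hC₂)
  · exact cyc (by simp) (by simp) had.symm hab hbc hcd (by linear_combination hC₁)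
  · exact cyc (by simp) (by simp) had.symm hac hbc.symm hbd (by linear_combination hC₃)

end

/-- Every split (partition into two pairs) of a `K₄`-obstruction on `{a,b,c,d}`
induces a split of `G`. -/
theorem naji_K4_split {V : Type*} (G : SimpleGraph V) (β : V → V → ZMod 2)
    (hβ : NajiSolution G β) (a b c d : V)
    (hobs : IsK4Obstruction G β a b c d)
    (A B : Set V)
    (hpart : A ∪ B = ({a, b, c, d} : Set V)) (hAB : Disjoint A B)
    (hA : A.Nontrivial) (hB : B.Nontrivial) :
    ∃ A' B' : Set V, IsSplit G A' B' ∧ A ⊆ A' ∧ B ⊆ B' :=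
  ⟨_, _, (hobs.isOddK4 hβ).isSplit hβ hpart hAB hA hB, fun k hk => ⟨k, hk, looksLike_self⟩,
    fun k hk => ⟨k, hk, looksLike_self⟩⟩
end

section
/- Let G be a graph that admits a split (X, Y), let xy be an edge with x ∈ X and y ∈ Y, and let G₁ = G[X ∪ {y}] and G₂ = G[Y ∪ {x}]. If G₁ and G₂ are both circle graphs, then G is a circle graph. -/
/-- `G` is a circle graph: there is a cyclic double occurrence word (each vertex
appearing exactly twice on a circle of `2n` positions) such that two vertices
are adjacent iff their occurrences interleave. -/
def IsCircleGraph {V : Type*} [DecidableEq V] (G : SimpleGraph V) : Prop :=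
  ∃ (n : ℕ) (w : Fin (2 * n) → V),
    (∀ v : V, (Finset.univ.filter fun i => w i = v).card = 2) ∧
    (∀ u v : V, u ≠ v →
      (G.Adj u v ↔ ∃ i j : Fin (2 * n), i < j ∧ w i = u ∧ w j = u ∧
        (Finset.univ.filter fun k => w k = v ∧ i < k ∧ k < j).card = 1))

/-!
Represent a circle graph by a word in which every vertex occurs twice, two vertices being
adjacent iff their occurrences interleave. Write the word of `G[X ∪ {y}]` as `P y Q y R` and that
of `G[Y ∪ {x}]` as `C x A x B`, and replace the first `y` by `A` and the second by `B C`. Two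
vertices of `X` keep their interleaving, and so do two vertices of `Y`, since interleaving is
invariant under rotating `C x A x B`. A vertex `u ∈ X` and a vertex `v ∈ Y` interleave iff `u`
occurs once in `Q` and `v` once in `A`, that is iff `uy` and `xv` are edges, which by the split
property happens exactly when `uv` is an edge.
-/

namespace DoubleOccurrenceWord

open List
open scoped Finset

variable {α : Type*}

theorem exists_eq_append_getElem_cons_append_getElem_cons (l : List α) {i j : ℕ} (hij : i < j)
    (hj : j < l.length) :
    ∃ a b c, l = a ++ l[i] :: b ++ l[j] :: c ∧ a.length = i ∧ a.length + b.length + 1 = j := by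
  refine ⟨l.take i, (l.take j).drop (i + 1), l.drop (j + 1), ?_, by simp; omega, by simp; omega⟩
  have hi : i < (l.take j).length := by simp; omega
  calc l = l.take j ++ l.drop j := (take_append_drop j l).symm
    _ = (l.take j).take i ++ (l.take j).drop i ++ l.drop j := by rw [take_append_drop i]
    _ = _ := by rw [drop_eq_getElem_cons hj, drop_eq_getElem_cons hi, take_take]; simp; omega

theorem apply_eq_getElem_of_ofFn_eq_append {n : ℕ} {w : Fin n → α} {a b c : List α}
    (h : ofFn w = a ++ b ++ c) {m : ℕ} (hm : a.length + m < n) (hmb : m < b.length) :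
    w ⟨a.length + m, hm⟩ = b[m] := by
  rw [← List.getElem_ofFn (f := w) (by simpa using hm)]
  simp [getElem_of_eq h, getElem_append_left, getElem_append_right, hmb]

variable [DecidableEq α]

def pairSubword (l : List α) (u v : α) : List α := l.filter fun a => a = u ∨ a = v

def Interleaved (l : List α) (u v : α) : Prop :=
  pairSubword l u v = [u, v, u, v] ∨ pairSubword l u v = [v, u, v, u]

@[simp]
theorem pairSubword_append (l l' : List α) (u v : α) :
    pairSubword (l ++ l') u v = pairSubword l u v ++ pairSubword l' u v :=
  filter_append ..

@[simp]
theorem pairSubword_cons_right (l : List α) (u v : α) :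
    pairSubword (v :: l) u v = v :: pairSubword l u v := by
  simp [pairSubword]

theorem pairSubword_cons_of_ne {l : List α} {a u v : α} (hu : a ≠ u) (hv : a ≠ v) :
    pairSubword (a :: l) u v = pairSubword l u v := by
  simp [pairSubword, hu, hv]

theorem pairSubword_comm (l : List α) (u v : α) : pairSubword l u v = pairSubword l v u :=
  filter_congr fun _ _ => by simp [or_comm]

theorem interleaved_comm (l : List α) (u v : α) : Interleaved l u v ↔ Interleaved l v u := by
  rw [Interleaved, Interleaved, pairSubword_comm, or_comm]

theorem pairSubword_eq_nil {l : List α} {u v : α} (hu : u ∉ l) (hv : v ∉ l) :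
    pairSubword l u v = [] :=
  filter_eq_nil_iff.2 fun a ha => by
    simp only [decide_eq_true_eq]
    rintro (rfl | rfl) <;> contradiction

theorem pairSubword_eq_replicate_left {l : List α} (u : α) {v : α} (hv : v ∉ l) :
    pairSubword l u v = replicate (l.count u) u := by
  rw [pairSubword, ← filter_eq]
  exact filter_congr fun a ha => by simp [ne_of_mem_of_not_mem ha hv]

theorem pairSubword_eq_replicate_right {l : List α} {u : α} (v : α) (hu : u ∉ l) :
    pairSubword l u v = replicate (l.count v) v := by
  rw [pairSubword_comm, pairSubword_eq_replicate_left v hu]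

theorem interleaved_append_comm (s t : List α) (u v : α) :
    Interleaved (s ++ t) u v ↔ Interleaved (t ++ s) u v := by
  suffices ∀ s t : List α, Interleaved (s ++ t) u v → Interleaved (t ++ s) u v from
    ⟨this s t, this t s⟩
  intro s t h
  simp only [Interleaved, pairSubword_append] at h ⊢
  generalize pairSubword s u v = s' at h ⊢
  rcases s' with _ | ⟨a, _ | ⟨b, _ | ⟨c, _ | ⟨d, s'⟩⟩⟩⟩ <;> rcases h with h | h <;> simp_all

theorem interleaved_map {β : Type*} [DecidableEq β] {f : α → β} (hf : Function.Injective f)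
    (l : List α) (u v : α) : Interleaved (l.map f) (f u) (f v) ↔ Interleaved l u v := by
  have : pairSubword (l.map f) (f u) (f v) = (pairSubword l u v).map f := by
    simp only [pairSubword, filter_map]
    congr 1
    exact filter_congr fun a _ => by simp [hf.eq_iff]
  simp only [Interleaved, this, ← (map_injective_iff.2 hf).eq_iff, map_cons, map_nil]

theorem interleaved_of_pairSubword_eq {l : List α} {u v : α} (huv : u ≠ v) {p q r a b : ℕ}
    (hpqr : p + q + r = 2) (hab : a + b = 2)
    (h : pairSubword l u v = replicate p u ++ replicate a v ++ replicate q u ++ replicate b v ++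
      replicate r u) :
    Interleaved l u v ↔ q = 1 ∧ a = 1 := by
  obtain rfl : r = 2 - p - q := by omega
  obtain rfl : b = 2 - a := by omega
  rw [Interleaved, h]
  have : p ≤ 2 := by omega
  have : q ≤ 2 := by omega
  have : a ≤ 2 := by omega
  interval_cases p <;> interval_cases q <;> interval_cases a <;>
    first | omega | simp [replicate_succ, huv, huv.symm]

theorem exists_eq_append_cons_append_cons_of_count_eq_two {l : List α} {u : α}
    (h : l.count u = 2) : ∃ a b c, l = a ++ u :: b ++ u :: c ∧ u ∉ a ∧ u ∉ b ∧ u ∉ c := by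
  obtain ⟨a, t, rfl, ha⟩ := eq_append_cons_of_mem (count_pos_iff.1 (by omega : 0 < l.count u))
  have ht : t.count u = 1 := by simp [count_eq_zero.2 ha] at h; omega
  obtain ⟨b, c, rfl, hb⟩ := eq_append_cons_of_mem (count_pos_iff.1 (by omega : 0 < t.count u))
  refine ⟨a, b, c, by simp, ha, hb, count_eq_zero.1 ?_⟩
  simpa [count_eq_zero.2 hb] using ht

theorem interleaved_append_cons_append_cons_iff {a b c : List α} {u v : α} (huv : u ≠ v)
    (ha : u ∉ a) (hb : u ∉ b) (hc : u ∉ c) (hv : a.count v + b.count v + c.count v = 2) :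
    Interleaved (a ++ u :: b ++ u :: c) u v ↔ b.count v = 1 := by
  rw [interleaved_comm, interleaved_of_pairSubword_eq huv.symm hv (by rfl : 1 + 1 = 2),
    and_iff_left rfl]
  simp [pairSubword_eq_replicate_left v ha, pairSubword_eq_replicate_left v hb,
    pairSubword_eq_replicate_left v hc]

theorem interleaved_iff_exists_count_eq_one {l : List α} {u v : α} (huv : u ≠ v)
    (hu : l.count u = 2) (hv : l.count v = 2) :
    Interleaved l u v ↔ ∃ a b c, l = a ++ u :: b ++ u :: c ∧ b.count v = 1 := by
  constructor
  · obtain ⟨a, b, c, rfl, ha, hb, hc⟩ := exists_eq_append_cons_append_cons_of_count_eq_two hu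
    simp [huv] at hv
    rw [interleaved_append_cons_append_cons_iff huv ha hb hc (by omega)]
    exact fun h => ⟨a, b, c, rfl, h⟩
  · rintro ⟨a, b, c, rfl, hb⟩
    simp [huv] at hu hv
    refine (interleaved_append_cons_append_cons_iff huv ?_ ?_ ?_ (by omega)).2 hb <;>
      rw [← count_eq_zero] <;> omega

section Splice

variable {P Q R C A B : List α} {x y u v : α}

def splice (P Q R C A B : List α) : List α := P ++ A ++ Q ++ B ++ C ++ R

theorem count_splice_eq_left (hv : v ∉ C ++ A ++ B) (hvy : v ≠ y) :
    (splice P Q R C A B).count v = (P ++ y :: Q ++ y :: R).count v := by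
  simp only [mem_append, not_or] at hv
  simp [splice, count_eq_zero.2, hv, hvy.symm]

theorem count_splice_eq_right (hv : v ∉ P ++ Q ++ R) (hvx : v ≠ x) :
    (splice P Q R C A B).count v = (C ++ x :: A ++ x :: B).count v := by
  simp only [mem_append, not_or] at hv
  simp [splice, count_eq_zero.2, hv, hvx.symm]
  omega

theorem interleaved_splice_iff_left (hu : u ∉ C ++ A ++ B) (hv : v ∉ C ++ A ++ B) (huy : u ≠ y)
    (hvy : v ≠ y) :
    Interleaved (splice P Q R C A B) u v ↔ Interleaved (P ++ y :: Q ++ y :: R) u v := by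
  simp only [mem_append, not_or] at hu hv
  simp [Interleaved, splice, pairSubword_eq_nil, hu, hv, pairSubword_cons_of_ne huy.symm hvy.symm]

theorem interleaved_splice_iff_right (hu : u ∉ P ++ Q ++ R) (hv : v ∉ P ++ Q ++ R) (hux : u ≠ x)
    (hvx : v ≠ x) :
    Interleaved (splice P Q R C A B) u v ↔ Interleaved (C ++ x :: A ++ x :: B) u v := by
  simp only [mem_append, not_or] at hu hv
  rw [splice, show P ++ A ++ Q ++ B ++ C ++ R = (P ++ A ++ Q ++ B) ++ (C ++ R) by simp,
    interleaved_append_comm]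
  simp [Interleaved, pairSubword_eq_nil, hu, hv, pairSubword_cons_of_ne hux.symm hvx.symm]

theorem interleaved_splice_iff_and (huv : u ≠ v) (hx : x ∉ C ++ A ++ B) (hy : y ∉ P ++ Q ++ R)
    (hu : u ∉ C ++ A ++ B) (hv : v ∉ P ++ Q ++ R) (huy : u ≠ y) (hvx : v ≠ x)
    (hu₂ : (P ++ y :: Q ++ y :: R).count u = 2) (hv₂ : (C ++ x :: A ++ x :: B).count v = 2) :
    Interleaved (splice P Q R C A B) u v ↔
      Interleaved (P ++ y :: Q ++ y :: R) u y ∧ Interleaved (C ++ x :: A ++ x :: B) x v := by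
  simp only [mem_append, not_or] at hx hy hu hv
  simp only [count_append, count_cons_of_ne huy.symm, count_cons_of_ne hvx.symm] at hu₂ hv₂
  rw [interleaved_comm (P ++ y :: Q ++ y :: R) u,
    interleaved_append_cons_append_cons_iff huy.symm hy.1.1 hy.1.2 hy.2 (by omega),
    interleaved_append_cons_append_cons_iff hvx.symm hx.1.1 hx.1.2 hx.2 (by omega)]
  refine interleaved_of_pairSubword_eq huv (by omega : P.count u + Q.count u + R.count u = 2)
    (by omega : A.count v + (B.count v + C.count v) = 2) ?_
  simp [splice, pairSubword_eq_replicate_left u, pairSubword_eq_replicate_right v, hu, hv,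
    replicate_add, -replicate_append_replicate]

end Splice

theorem count_ofFn {n : ℕ} (w : Fin n → α) (a : α) :
    (ofFn w).count a = #{i | w i = a} := by
  induction n with
  | zero => simp
  | succ n ih =>
    rw [ofFn_succ, count_cons, ih, Finset.card_filter, Finset.card_filter, Fin.sum_univ_succ]
    simp [add_comm]

theorem card_filter_eq_count_of_ofFn_eq {n : ℕ} {w : Fin n → α} {a b c : List α}
    (h : ofFn w = a ++ b ++ c) (v : α) :
    #{k | w k = v ∧ a.length ≤ k ∧ (k : ℕ) < a.length + b.length} = b.count v := by
  have hn : a.length + b.length ≤ n := by have := congrArg length h; simp at this; omega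
  have hb : b = ofFn fun m : Fin b.length => w ⟨a.length + m, by omega⟩ :=
    ext_getElem (by simp) fun m hm _ => by simp [apply_eq_getElem_of_ofFn_eq_append h _ hm]
  conv_rhs => rw [hb, count_ofFn]
  symm
  refine Finset.card_bij (fun m _ => ⟨a.length + m, by omega⟩) ?_ ?_ ?_
  · intro m hm; simp at hm ⊢; omega
  · intro m _ m' _ hmm'; exact Fin.ext (by simpa using hmm')
  · intro k hk
    simp at hk
    refine ⟨⟨k - a.length, by omega⟩, ?_, Fin.ext (by simp; omega)⟩
    simpa [Nat.add_sub_cancel' hk.2.1] using hk.1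

theorem exists_lt_card_filter_between_eq_one_iff {n : ℕ} (w : Fin n → α) (u v : α) :
    (∃ i j : Fin n, i < j ∧ w i = u ∧ w j = u ∧ #{k | w k = v ∧ i < k ∧ k < j} = 1) ↔
      ∃ a b c, ofFn w = a ++ u :: b ++ u :: c ∧ b.count v = 1 := by
  have hcard : ∀ {a b c : List α} {u u' : α}, ofFn w = a ++ u :: b ++ u' :: c →
      #{k | w k = v ∧ a.length < k ∧ (k : ℕ) < a.length + b.length + 1} = b.count v := by
    intro a b c u u' h
    rw [← card_filter_eq_count_of_ofFn_eq (a := a ++ [u]) (c := u' :: c) (by simpa using h)]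
    congr! 3 with k
    simp; omega
  constructor
  · rintro ⟨i, j, hij, rfl, hju, hij1⟩
    obtain ⟨a, b, c, hl, ha, hj⟩ :=
      exists_eq_append_getElem_cons_append_getElem_cons (ofFn w) hij (by simp)
    simp only [List.getElem_ofFn, Fin.eta, hju] at hl
    refine ⟨a, b, c, hl, ?_⟩
    rw [← hcard hl]
    refine Eq.trans ?_ hij1
    congr! 3 with k
    simp only [Fin.lt_def, ← ha, ← hj]
  · rintro ⟨a, b, c, hl, hb⟩
    have hn : a.length + b.length + 1 < n := by have := congrArg length hl; simp at this; omega
    have hw (k : Fin n) : w k = (a ++ u :: b ++ u :: c)[(k : ℕ)]'(hl ▸ by simp) := by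
      rw [← getElem_of_eq hl (by simp), List.getElem_ofFn]
    refine ⟨⟨a.length, by omega⟩, ⟨a.length + b.length + 1, hn⟩, by simp [Fin.lt_def], ?_, ?_, ?_⟩
    · simp [hw]
    · grind
    · rw [← hcard hl] at hb
      refine Eq.trans ?_ hb
      congr! 3

end DoubleOccurrenceWord

open DoubleOccurrenceWord

theorem isCircleGraph_iff_exists_list {V : Type*} [DecidableEq V] (G : SimpleGraph V) :
    IsCircleGraph G ↔
      ∃ l : List V, (∀ v, l.count v = 2) ∧ ∀ u v, u ≠ v → (G.Adj u v ↔ Interleaved l u v) := by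
  constructor
  · rintro ⟨n, w, hcount, hadj⟩
    have hcount' : ∀ v, (List.ofFn w).count v = 2 := fun v => (count_ofFn w v).trans (hcount v)
    refine ⟨List.ofFn w, hcount', fun u v huv => ?_⟩
    rw [hadj u v huv, exists_lt_card_filter_between_eq_one_iff,
      interleaved_iff_exists_count_eq_one huv (hcount' u) (hcount' v)]
  · rintro ⟨l, hcount, hadj⟩
    obtain ⟨n, hn⟩ : ∃ n, l.length = 2 * n :=
      ⟨l.dedup.length, by simp [← List.sum_map_count_dedup_eq_length, hcount, mul_comm]⟩
    let w : Fin (2 * n) → V := fun i => l[(i : ℕ)]'(by rw [hn]; exact i.2)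
    have hw : List.ofFn w = l := List.ext_getElem (by simp [hn]) fun _ _ _ => by simp [w]
    refine ⟨n, w, fun v => by rw [← count_ofFn, hw, hcount], fun u v huv => ?_⟩
    rw [exists_lt_card_filter_between_eq_one_iff, hw,
      ← interleaved_iff_exists_count_eq_one huv (hcount u) (hcount v), hadj u v huv]

theorem IsCircleGraph.exists_list_of_induce {V : Type*} [DecidableEq V] {G : SimpleGraph V}
    {S : Set V} (h : IsCircleGraph (G.induce S)) :
    ∃ l : List V, (∀ a ∈ l, a ∈ S) ∧ (∀ v ∈ S, l.count v = 2) ∧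
      ∀ u ∈ S, ∀ v ∈ S, u ≠ v → (G.Adj u v ↔ Interleaved l u v) := by
  obtain ⟨l, hcount, hadj⟩ := (isCircleGraph_iff_exists_list _).1 h
  refine ⟨l.map (↑), by simp +contextual, fun v hv => ?_, fun u hu v hv huv => ?_⟩
  · exact (@List.count_map_of_injective _ _ instBEqOfDecidableEq _ _ _ l _ Subtype.val_injective
      ⟨v, hv⟩).trans (hcount _)
  · exact (hadj ⟨u, hu⟩ ⟨v, hv⟩ (by simpa)).trans
      (interleaved_map Subtype.val_injective l ⟨u, hu⟩ ⟨v, hv⟩).symm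

theorem IsCircleGraph.exists_list_of_induce_union_singleton {V : Type*} [DecidableEq V]
    {G : SimpleGraph V} {X : Set V} {y : V} (h : IsCircleGraph (G.induce (X ∪ {y}))) :
    ∃ P Q R : List V, (∀ a ∈ P ++ Q ++ R, a ∈ X) ∧ y ∉ P ++ Q ++ R ∧
      (∀ v ∈ X, (P ++ y :: Q ++ y :: R).count v = 2) ∧ ∀ u ∈ X ∪ {y}, ∀ v ∈ X ∪ {y}, u ≠ v →
        (G.Adj u v ↔ Interleaved (P ++ y :: Q ++ y :: R) u v) := by
  obtain ⟨l, hl, hcount, hadj⟩ := h.exists_list_of_induce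
  obtain ⟨P, Q, R, rfl, hP, hQ, hR⟩ :=
    exists_eq_append_cons_append_cons_of_count_eq_two (hcount y (Set.mem_union_right _ rfl))
  have hy : y ∉ P ++ Q ++ R := by simp [hP, hQ, hR]
  refine ⟨P, Q, R, fun a ha => ?_, hy, fun v hv => hcount v (Set.mem_union_left _ hv), hadj⟩
  have : a ∈ X ∪ {y} := hl a (by simp at ha ⊢; tauto)
  exact this.resolve_right (by rintro rfl; exact hy ha)

theorem IsSplit.adj_iff {V : Type*} {G : SimpleGraph V} {X Y : Set V} (h : IsSplit G X Y)
    {x y u v : V} (hx : x ∈ X) (hy : y ∈ Y) (hxy : G.Adj x y) (hu : u ∈ X) (hv : v ∈ Y) :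
    G.Adj u v ↔ G.Adj u y ∧ G.Adj x v :=
  ⟨fun huv => ⟨h.2.2.2.2 u hu x hx v hv y hy huv hxy, h.2.2.2.2 x hx u hu y hy v hv hxy huv⟩,
    fun ⟨huy, hxv⟩ => h.2.2.2.2 u hu x hx y hy v hv huy hxv⟩

/-- Composition along a split: if `(X,Y)` is a split of `G`, `xy` an edge with
`x ∈ X`, `y ∈ Y`, and both `G[X ∪ {y}]` and `G[Y ∪ {x}]` are circle graphs,
then so is `G`. -/
theorem circle_graph_split_composition {V : Type*} [DecidableEq V]
    (G : SimpleGraph V) (X Y : Set V) (hsplit : IsSplit G X Y)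
    (x y : V) (hx : x ∈ X) (hy : y ∈ Y) (hxy : G.Adj x y)
    (h₁ : IsCircleGraph (G.induce (X ∪ {y})))
    (h₂ : IsCircleGraph (G.induce (Y ∪ {x}))) :
    IsCircleGraph G := by
  have hXY (a : V) : a ∈ X ∨ a ∈ Y := Set.eq_univ_iff_forall.1 hsplit.1 a
  have hdisj : ∀ ⦃a⦄, a ∈ X → a ∉ Y := Set.disjoint_left.1 hsplit.2.1
  obtain ⟨P, Q, R, hPQR, hyPQR, hcount₁, hadj₁⟩ := h₁.exists_list_of_induce_union_singleton
  obtain ⟨C, A, B, hCAB, hxCAB, hcount₂, hadj₂⟩ := h₂.exists_list_of_induce_union_singleton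
  have hX {u : V} (hu : u ∈ X) : u ∉ C ++ A ++ B ∧ u ≠ y :=
    ⟨fun h => hdisj hu (hCAB u h), by rintro rfl; exact hdisj hu hy⟩
  have hY {v : V} (hv : v ∈ Y) : v ∉ P ++ Q ++ R ∧ v ≠ x :=
    ⟨fun h => hdisj (hPQR v h) hv, by rintro rfl; exact hdisj hx hv⟩
  have hmixed {u v : V} (hu : u ∈ X) (hv : v ∈ Y) :
      G.Adj u v ↔ Interleaved (splice P Q R C A B) u v := by
    rw [hsplit.adj_iff hx hy hxy hu hv, interleaved_splice_iff_and
      (by rintro rfl; exact hdisj hu hv) hxCAB hyPQR (hX hu).1 (hY hv).1 (hX hu).2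
      (hY hv).2 (hcount₁ u hu) (hcount₂ v hv), hadj₁ u (.inl hu) y (.inr rfl) (hX hu).2,
      hadj₂ x (.inr rfl) v (.inl hv) (hY hv).2.symm]
  refine (isCircleGraph_iff_exists_list G).2 ⟨splice P Q R C A B, fun v => ?_, fun u v huv => ?_⟩
  · rcases hXY v with hv | hv
    · rw [count_splice_eq_left (hX hv).1 (hX hv).2, hcount₁ v hv]
    · rw [count_splice_eq_right (hY hv).1 (hY hv).2, hcount₂ v hv]
  · rcases hXY u with hu | hu <;> rcases hXY v with hv | hv
    · rw [interleaved_splice_iff_left (hX hu).1 (hX hv).1 (hX hu).2 (hX hv).2]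
      exact hadj₁ u (.inl hu) v (.inl hv) huv
    · exact hmixed hu hv
    · rw [G.adj_comm, interleaved_comm]
      exact hmixed hv hu
    · rw [interleaved_splice_iff_right (hY hu).1 (hY hv).1 (hY hu).2 (hY hv).2]
      exact hadj₂ u (.inl hu) v (.inl hv) huv
end

section
/- If G is a circle graph, then the Naji system of G has a solution: there exists β : V × V → 𝔽₂ on ordered pairs of distinct vertices such that (1) β(v,w) + β(w,v) = 1 for each edge vw; (2) β(x,v) + β(x,w) = 0 whenever vw is an edge but xv, xw are not; (3) β(v,w) + β(w,v) + β(x,v) + β(x,w) = 1 whenever xv, xw are edges but vw is not. -/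
/-
Cut the circle open at a point: every chord `v` becomes an interval `[left v, right v]` of
positions, and two chords cross iff exactly one endpoint of one lies strictly inside the other.
Put `β(v, w) = 1` iff the left end of `w` lies inside `v`. Each Naji equation is then a statement
about the relative order of the endpoints of at most three chords: of two crossing chords,
exactly one has its left end inside the other; a chord that crosses neither of two crossing chords
has both of them on the same side; and if `x` crosses two non-crossing chords `v` and `w`, then
`v` and `w` are nested iff their left ends lie on the same side of `x`.
-/

open Finset

theorem ite_add_ite_zmod_two (p q : Prop) [Decidable p] [Decidable q] :
    ((if p then 1 else 0 : ZMod 2) + if q then 1 else 0) = if Xor p q then 1 else 0 := by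
  by_cases hp : p <;> by_cases hq : q <;> simp [hp, hq, Xor, CharTwo.add_self_eq_zero]

structure ChordDiagram (V : Type*) where
  left : V → ℕ
  right : V → ℕ
  left_lt_right : ∀ v, left v < right v
  endpoints_ne : ∀ ⦃u v⦄, u ≠ v →
    left u ≠ left v ∧ left u ≠ right v ∧ right u ≠ left v ∧ right u ≠ right v

namespace ChordDiagram

variable {V : Type*} (D : ChordDiagram V)

def Inside (v : V) (p : ℕ) : Prop := D.left v < p ∧ p < D.right v

instance (v : V) (p : ℕ) : Decidable (D.Inside v p) := inferInstanceAs (Decidable (_ ∧ _))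

def Crosses (u v : V) : Prop := Xor (D.Inside u (D.left v)) (D.Inside u (D.right v))

theorem not_crosses_self (v : V) : ¬D.Crosses v v := by
  have := D.left_lt_right v
  simp only [Crosses, Inside, Xor]
  omega

theorem crosses_comm (u v : V) : D.Crosses u v ↔ D.Crosses v u := by
  rcases eq_or_ne u v with rfl | huv
  · rfl
  have := D.left_lt_right u; have := D.left_lt_right v; have := D.endpoints_ne huv
  simp only [Crosses, Inside, Xor]
  omega

theorem ne_of_crosses {u v : V} (h : D.Crosses u v) : u ≠ v := by
  rintro rfl
  exact D.not_crosses_self u h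

def crossingGraph : SimpleGraph V where
  Adj := D.Crosses
  symm := ⟨fun _ _ => (D.crosses_comm _ _).mp⟩
  loopless := ⟨D.not_crosses_self⟩

theorem xor_inside_left_of_crosses {v w : V} (h : D.Crosses v w) :
    Xor (D.Inside v (D.left w)) (D.Inside w (D.left v)) := by
  have := D.left_lt_right v; have := D.left_lt_right w; have := D.endpoints_ne (D.ne_of_crosses h)
  simp only [Crosses, Inside, Xor] at *
  omega

theorem not_xor_inside_left_of_not_crosses {x v w : V} (hxv : x ≠ v) (hxw : x ≠ w)
    (hvw : D.Crosses v w) (hnxv : ¬D.Crosses x v) (hnxw : ¬D.Crosses x w) :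
    ¬Xor (D.Inside x (D.left v)) (D.Inside x (D.left w)) := by
  have := D.left_lt_right x; have := D.left_lt_right v; have := D.left_lt_right w
  have := D.endpoints_ne hxv; have := D.endpoints_ne hxw
  have := D.endpoints_ne (D.ne_of_crosses hvw)
  simp only [Crosses, Inside, Xor] at *
  omega

theorem xor_inside_left_of_crosses_of_crosses {x v w : V} (hvw : v ≠ w)
    (hxv : D.Crosses x v) (hxw : D.Crosses x w) (hnvw : ¬D.Crosses v w) :
    Xor (Xor (D.Inside v (D.left w)) (D.Inside w (D.left v)))
      (Xor (D.Inside x (D.left v)) (D.Inside x (D.left w))) := by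
  have := D.left_lt_right x; have := D.left_lt_right v; have := D.left_lt_right w
  have := D.endpoints_ne (D.ne_of_crosses hxv); have := D.endpoints_ne (D.ne_of_crosses hxw)
  have := D.endpoints_ne hvw
  simp only [Crosses, Inside, Xor] at *
  omega

/-- With the head of each chord at its left end and positions increasing counterclockwise,
this is the `β` of the Naji system. -/
def beta (v w : V) : ZMod 2 := if D.Inside v (D.left w) then 1 else 0

theorem beta_add_beta (v w x y : V) :
    D.beta v w + D.beta x y =
      if Xor (D.Inside v (D.left w)) (D.Inside x (D.left y)) then 1 else 0 :=
  ite_add_ite_zmod_two _ _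

theorem najiSolution_beta : NajiSolution D.crossingGraph D.beta := by
  refine ⟨fun v w hvw => ?_, fun x v w hxv hxw hvw hnxv hnxw => ?_,
    fun x v w hvw hxv hxw hnvw => ?_⟩
  · rw [beta_add_beta, if_pos (D.xor_inside_left_of_crosses hvw)]
  · rw [beta_add_beta, if_neg (D.not_xor_inside_left_of_not_crosses hxv hxw hvw hnxv hnxw)]
  · rw [add_assoc, beta_add_beta, beta_add_beta, ite_add_ite_zmod_two,
      if_pos (D.xor_inside_left_of_crosses_of_crosses hvw hxv hxw hnvw)]

end ChordDiagram

theorem Finset.exists_lt_eq_pair_of_card_eq_two {α : Type*} [LinearOrder α] {s : Finset α}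
    (h : #s = 2) : ∃ i j, i < j ∧ s = {i, j} := by
  obtain ⟨x, y, hxy, rfl⟩ := card_eq_two.mp h
  rcases hxy.lt_or_gt with hlt | hlt
  · exact ⟨x, y, hlt, rfl⟩
  · exact ⟨y, x, hlt, pair_comm x y⟩

theorem Finset.card_filter_pair_eq_one_iff {α : Type*} [DecidableEq α] {p q : α} (h : p ≠ q)
    (P : α → Prop) [DecidablePred P] :
    #(({p, q} : Finset α).filter P) = 1 ↔ Xor (P p) (P q) := by
  by_cases hp : P p <;> by_cases hq : P q <;>
    simp [filter_insert, filter_singleton, hp, hq, h, Xor]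

theorem exists_lt_iff_of_forall_iff_eq_or_eq {α : Type*} [LinearOrder α] {Q : α → Prop}
    {i₀ j₀ : α} (hQ : ∀ k, Q k ↔ k = i₀ ∨ k = j₀) (hlt : i₀ < j₀)
    (P : α → α → Prop) :
    (∃ i j, i < j ∧ Q i ∧ Q j ∧ P i j) ↔ P i₀ j₀ := by
  refine ⟨?_, fun h => ⟨i₀, j₀, hlt, (hQ _).mpr (.inl rfl), (hQ _).mpr (.inr rfl), h⟩⟩
  rintro ⟨i, j, hij, hi, hj, h⟩
  rcases (hQ i).mp hi with rfl | rfl <;> rcases (hQ j).mp hj with rfl | rfl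
  · exact absurd hij (lt_irrefl _)
  · exact h
  · exact absurd (hij.trans hlt) (lt_irrefl _)
  · exact absurd hij (lt_irrefl _)

theorem IsCircleGraph.exists_eq_crossingGraph {V : Type*} [DecidableEq V] {G : SimpleGraph V}
    (h : IsCircleGraph G) : ∃ D : ChordDiagram V, G = D.crossingGraph := by
  obtain ⟨n, w, hcard, hadj⟩ := h
  choose a b hab hfiber using fun v => exists_lt_eq_pair_of_card_eq_two (hcard v)
  have hmem (v : V) (k : Fin (2 * n)) : w k = v ↔ k = a v ∨ k = b v := by
    simpa using Finset.ext_iff.mp (hfiber v) k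
  have ha (v : V) : w (a v) = v := (hmem v _).mpr (.inl rfl)
  have hb (v : V) : w (b v) = v := (hmem v _).mpr (.inr rfl)
  let D : ChordDiagram V :=
    { left v := a v
      right v := b v
      left_lt_right := hab
      endpoints_ne := fun u v huv => by
        have hne {i j : Fin (2 * n)} (hi : w i = u) (hj : w j = v) : (i : ℕ) ≠ j :=
          fun hij => huv (hi ▸ hj ▸ congrArg w (Fin.ext hij))
        exact ⟨hne (ha u) (ha v), hne (ha u) (hb v), hne (hb u) (ha v), hne (hb u) (hb v)⟩ }
  refine ⟨D, SimpleGraph.ext <| funext₂ fun u v => propext ?_⟩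
  rcases eq_or_ne u v with rfl | huv
  · exact iff_of_false (G.loopless.irrefl u) (D.not_crosses_self u)
  rw [hadj u v huv, exists_lt_iff_of_forall_iff_eq_or_eq (hmem u) (hab u), ← filter_filter,
    hfiber v, card_filter_pair_eq_one_iff (hab v).ne]
  rfl

theorem circle_graph_naji_solution_general {V : Type*} [DecidableEq V]
    (G : SimpleGraph V) (h : IsCircleGraph G) :
    ∃ β : V → V → ZMod 2, NajiSolution G β := by
  obtain ⟨D, rfl⟩ := h.exists_eq_crossingGraph
  exact ⟨D.beta, D.najiSolution_beta⟩

/-- Every circle graph admits a solution of its Naji system. -/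
theorem circle_graph_naji_solution {V : Type*} [Fintype V] [DecidableEq V]
    (G : SimpleGraph V) (h : IsCircleGraph G) :
    ∃ β : V → V → ZMod 2, NajiSolution G β :=
  circle_graph_naji_solution_general G h
end

section
/- Let G be a graph with a Naji-system solution β, and let {a,b,c,d} induce a K₄ in G such that every 4-cycle on {a,b,c,d} is odd with respect to β. Suppose (X_a, X_b, X_c, X_d) are disjoint vertex sets with a ∈ X_a, b ∈ X_b, c ∈ X_c, d ∈ X_d such that for every choice a' ∈ X_a, b' ∈ X_b, c' ∈ X_c, d' ∈ X_d, the set {a',b',c',d'} induces a K₄ all of whose 4-cycles are odd, and suppose (X_a,X_b,X_c,X_d) is maximal with this property. Let X = X_a ∪ X_b ∪ X_c ∪ X_d. Then every vertex v ∈ V(G) − X is either adjacent to vertices in at most one of the sets X_a, X_b, X_c, X_d, or adjacent to every vertex of X. -/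
/-- All choices of representatives from `(Xa, Xb, Xc, Xd)` give `K₄`-obstructions. -/
def AllObstructions {V : Type*} (G : SimpleGraph V) (β : V → V → ZMod 2)
    (Xa Xb Xc Xd : Set V) : Prop :=
  ∀ a' ∈ Xa, ∀ b' ∈ Xb, ∀ c' ∈ Xc, ∀ d' ∈ Xd, IsK4Obstruction G β a' b' c' d'

theorem exists_mem_forall_imp {α : Type*} {X : Set α} {x₀ : α} (hx₀ : x₀ ∈ X) (p : α → Prop) :
    ∃ x ∈ X, ∀ u ∈ X, p u → p x := by
  by_cases h : ∃ u ∈ X, p u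
  · obtain ⟨u, hu, hpu⟩ := h
    exact ⟨u, hu, fun _ _ _ => hpu⟩
  · exact ⟨x₀, hx₀, fun u hu hpu => (h ⟨u, hu, hpu⟩).elim⟩

section

variable {V : Type*} {G : SimpleGraph V} {β : V → V → ZMod 2}

open Classical in
noncomputable def adjCount (G : SimpleGraph V) (v a b c d : V) : ℕ :=
  (if G.Adj v a then 1 else 0) + (if G.Adj v b then 1 else 0) +
    (if G.Adj v c then 1 else 0) + (if G.Adj v d then 1 else 0)

namespace IsK4Obstruction

variable {a b c d v : V}

theorem swap₁₂ (hβ : NajiSolution G β) (h : IsK4Obstruction G β a b c d) :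
    IsK4Obstruction G β b a c d := by
  obtain ⟨hab, hac, had, hbc, hbd, hcd, h₁, h₂, h₃⟩ := h
  have := hβ.1 _ _ hab; have := hβ.1 _ _ hac; have := hβ.1 _ _ had
  have := hβ.1 _ _ hbc; have := hβ.1 _ _ hbd; have := hβ.1 _ _ hcd
  exact ⟨hab.symm, hbc, hbd, hac, had, hcd, by grind, by grind, by grind⟩

theorem swap₂₃ (hβ : NajiSolution G β) (h : IsK4Obstruction G β a b c d) :
    IsK4Obstruction G β a c b d := by
  obtain ⟨hab, hac, had, hbc, hbd, hcd, h₁, h₂, h₃⟩ := h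
  have := hβ.1 _ _ hab; have := hβ.1 _ _ hac; have := hβ.1 _ _ had
  have := hβ.1 _ _ hbc; have := hβ.1 _ _ hbd; have := hβ.1 _ _ hcd
  exact ⟨hac, hab, had, hbc.symm, hcd, hbd, by grind, by grind, by grind⟩

theorem swap₃₄ (hβ : NajiSolution G β) (h : IsK4Obstruction G β a b c d) :
    IsK4Obstruction G β a b d c := by
  obtain ⟨hab, hac, had, hbc, hbd, hcd, h₁, h₂, h₃⟩ := h
  have := hβ.1 _ _ hab; have := hβ.1 _ _ hac; have := hβ.1 _ _ had
  have := hβ.1 _ _ hbc; have := hβ.1 _ _ hbd; have := hβ.1 _ _ hcd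
  exact ⟨hab, had, hac, hbd, hbc, hcd.symm, by grind, by grind, by grind⟩

theorem adj_or_adj_of_adj_of_adj (hβ : NajiSolution G β) (h : IsK4Obstruction G β a b c d)
    (hva : G.Adj v a) (hvb : G.Adj v b) : G.Adj v c ∨ G.Adj v d := by
  by_contra! ⟨hvc, hvd⟩
  obtain ⟨hab, hac, had, hbc, hbd, hcd, -, -, h₃⟩ := h
  have hc : v ≠ c := fun hvc' => hvd (hvc' ▸ hcd)
  have hd : v ≠ d := fun hvd' => hvc (hvd' ▸ hcd.symm)
  have := hβ.2.2 a v c hc hva.symm hac hvc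
  have := hβ.2.2 a v d hd hva.symm had hvd
  have := hβ.2.2 b v c hc hvb.symm hbc hvc
  have := hβ.2.2 b v d hd hvb.symm hbd hvd
  have := hβ.1 _ _ hbc; have := hβ.1 _ _ had
  grind

/-- Claim B of the paper. -/
theorem replace_fourth (hβ : NajiSolution G β) (h : IsK4Obstruction G β a b c d)
    (hva : G.Adj v a) (hvb : G.Adj v b) (hvc : G.Adj v c) (hvd : ¬G.Adj v d) :
    IsK4Obstruction G β a b c v := by
  obtain rfl | hd := eq_or_ne v d
  · exact h
  obtain ⟨hab, hac, had, hbc, hbd, hcd, h₁, h₂, h₃⟩ := h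
  have := hβ.2.2 a v d hd hva.symm had hvd
  have := hβ.2.2 b v d hd hvb.symm hbd hvd
  have := hβ.2.2 c v d hd hvc.symm hcd hvd
  have := hβ.1 _ _ hva; have := hβ.1 _ _ hvc; have := hβ.1 _ _ had; have := hβ.1 _ _ hcd
  exact ⟨hab, hac, hva.symm, hbc, hvb.symm, hvc.symm, by grind, by grind, by grind⟩

theorem adjCount_ne_two (hβ : NajiSolution G β) (h : IsK4Obstruction G β a b c d) :
    adjCount G v a b c d ≠ 2 := by
  have hab := h.adj_or_adj_of_adj_of_adj hβ (v := v)
  have hac := (h.swap₂₃ hβ).adj_or_adj_of_adj_of_adj hβ (v := v)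
  have had := ((h.swap₃₄ hβ).swap₂₃ hβ).adj_or_adj_of_adj_of_adj hβ (v := v)
  have hbc := ((h.swap₁₂ hβ).swap₂₃ hβ).adj_or_adj_of_adj_of_adj hβ (v := v)
  have hbd := (((h.swap₃₄ hβ).swap₁₂ hβ).swap₂₃ hβ).adj_or_adj_of_adj_of_adj hβ (v := v)
  have hcd := ((((h.swap₂₃ hβ).swap₁₂ hβ).swap₃₄ hβ).swap₂₃ hβ).adj_or_adj_of_adj_of_adj hβ
    (v := v)
  unfold adjCount
  split_ifs <;> simp_all

theorem replace_fourth_of_three_le_adjCount (hβ : NajiSolution G β)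
    (h : IsK4Obstruction G β a b c d) (h3 : 3 ≤ adjCount G v a b c d) (hvd : ¬G.Adj v d) :
    IsK4Obstruction G β a b c v := by
  unfold adjCount at h3
  split_ifs at h3 with hva hvb hvc <;> first | omega | exact h.replace_fourth hβ hva hvb hvc hvd

end IsK4Obstruction

namespace AllObstructions

variable {X₁ X₂ X₃ X₄ : Set V} {a b c d v : V}

theorem swap₁₂ (hβ : NajiSolution G β) (h : AllObstructions G β X₁ X₂ X₃ X₄) :
    AllObstructions G β X₂ X₁ X₃ X₄ :=
  fun _ ha _ hb _ hc _ hd => (h _ hb _ ha _ hc _ hd).swap₁₂ hβ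

theorem swap₂₃ (hβ : NajiSolution G β) (h : AllObstructions G β X₁ X₂ X₃ X₄) :
    AllObstructions G β X₁ X₃ X₂ X₄ :=
  fun _ ha _ hb _ hc _ hd => (h _ ha _ hc _ hb _ hd).swap₂₃ hβ

theorem swap₃₄ (hβ : NajiSolution G β) (h : AllObstructions G β X₁ X₂ X₃ X₄) :
    AllObstructions G β X₁ X₂ X₄ X₃ :=
  fun _ ha _ hb _ hc _ hd => (h _ ha _ hb _ hd _ hc).swap₃₄ hβ

theorem three_le_adjCount (hβ : NajiSolution G β) (h : AllObstructions G β X₁ X₂ X₃ X₄)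
    (ha : a ∈ X₁) (hb : b ∈ X₂) (hc : c ∈ X₃) (hd : d ∈ X₄) (h2 : 2 ≤ adjCount G v a b c d)
    {a' b' c' d' : V} (ha' : a' ∈ X₁) (hb' : b' ∈ X₂) (hc' : c' ∈ X₃) (hd' : d' ∈ X₄) :
    3 ≤ adjCount G v a' b' c' d' := by
  have three_le_of_two_le {a b c d : V} (ha : a ∈ X₁) (hb : b ∈ X₂) (hc : c ∈ X₃) (hd : d ∈ X₄)
      (h2 : 2 ≤ adjCount G v a b c d) : 3 ≤ adjCount G v a b c d := by
    have := (h a ha b hb c hc d hd).adjCount_ne_two hβ (v := v)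
    omega
  have h₀ := three_le_of_two_le ha hb hc hd h2
  have h₁ := three_le_of_two_le ha' hb hc hd <| by
    unfold adjCount at h₀ ⊢; split_ifs at h₀ ⊢ <;> omega
  have h₂ := three_le_of_two_le ha' hb' hc hd <| by
    unfold adjCount at h₁ ⊢; split_ifs at h₁ ⊢ <;> omega
  have h₃ := three_le_of_two_le ha' hb' hc' hd <| by
    unfold adjCount at h₂ ⊢; split_ifs at h₂ ⊢ <;> omega
  exact three_le_of_two_le ha' hb' hc' hd' <| by
    unfold adjCount at h₃ ⊢; split_ifs at h₃ ⊢ <;> omega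

theorem forall_adj_of_not_insert_fourth (hβ : NajiSolution G β)
    (h : AllObstructions G β X₁ X₂ X₃ X₄) (hmax : ¬AllObstructions G β X₁ X₂ X₃ (insert v X₄))
    (ha : a ∈ X₁) (hb : b ∈ X₂) (hc : c ∈ X₃) (hd : d ∈ X₄) (h2 : 2 ≤ adjCount G v a b c d) :
    ∀ x ∈ X₄, G.Adj v x := by
  intro x hx
  by_contra hvx
  refine hmax fun a' ha' b' hb' c' hc' d' hd' => ?_
  obtain rfl | hd' := Set.mem_insert_iff.1 hd'
  · exact (h a' ha' b' hb' c' hc' x hx).replace_fourth_of_three_le_adjCount hβ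
      (h.three_le_adjCount hβ ha hb hc hd h2 ha' hb' hc' hx) hvx
  · exact h a' ha' b' hb' c' hc' d' hd'

theorem forall_adj_of_two_le_adjCount (hβ : NajiSolution G β)
    (h : AllObstructions G β X₁ X₂ X₃ X₄)
    (hmax : ¬AllObstructions G β (insert v X₁) X₂ X₃ X₄ ∧
      ¬AllObstructions G β X₁ (insert v X₂) X₃ X₄ ∧
      ¬AllObstructions G β X₁ X₂ (insert v X₃) X₄ ∧
      ¬AllObstructions G β X₁ X₂ X₃ (insert v X₄))
    (ha : a ∈ X₁) (hb : b ∈ X₂) (hc : c ∈ X₃) (hd : d ∈ X₄) (h2 : 2 ≤ adjCount G v a b c d) :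
    ∀ u ∈ X₁ ∪ X₂ ∪ X₃ ∪ X₄, G.Adj v u := by
  obtain ⟨hm₁, hm₂, hm₃, hm₄⟩ := hmax
  have h₄ := h.forall_adj_of_not_insert_fourth hβ hm₄ ha hb hc hd h2
  have h₃ := (h.swap₃₄ hβ).forall_adj_of_not_insert_fourth hβ (fun h' => hm₃ (h'.swap₃₄ hβ))
    ha hb hd hc (by unfold adjCount at *; omega)
  have h₂ := ((h.swap₂₃ hβ).swap₃₄ hβ).forall_adj_of_not_insert_fourth hβ
    (fun h' => hm₂ ((h'.swap₃₄ hβ).swap₂₃ hβ)) ha hc hd hb (by unfold adjCount at *; omega)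
  have h₁ := (((h.swap₁₂ hβ).swap₂₃ hβ).swap₃₄ hβ).forall_adj_of_not_insert_fourth hβ
    (fun h' => hm₁ (((h'.swap₃₄ hβ).swap₂₃ hβ).swap₁₂ hβ)) hb hc hd ha
    (by unfold adjCount at *; omega)
  rintro u (((hu | hu) | hu) | hu)
  exacts [h₁ u hu, h₂ u hu, h₃ u hu, h₄ u hu]

end AllObstructions

end

theorem naji_K4_neighbours_general {V : Type*} (G : SimpleGraph V) (β : V → V → ZMod 2)
    (hβ : NajiSolution G β) (a b c d : V)
    (Xa Xb Xc Xd : Set V)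
    (ha : a ∈ Xa) (hb : b ∈ Xb) (hc : c ∈ Xc) (hd : d ∈ Xd)
    (hobs : AllObstructions G β Xa Xb Xc Xd)
    (hmax : ∀ v : V, v ∉ Xa ∪ Xb ∪ Xc ∪ Xd →
      ¬AllObstructions G β (insert v Xa) Xb Xc Xd ∧
      ¬AllObstructions G β Xa (insert v Xb) Xc Xd ∧
      ¬AllObstructions G β Xa Xb (insert v Xc) Xd ∧
      ¬AllObstructions G β Xa Xb Xc (insert v Xd)) :
    ∀ v : V, v ∉ Xa ∪ Xb ∪ Xc ∪ Xd →
      (∀ S T : Set V, (S = Xa ∨ S = Xb ∨ S = Xc ∨ S = Xd) →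
        (T = Xa ∨ T = Xb ∨ T = Xc ∨ T = Xd) → S ≠ T →
        (∃ u ∈ S, G.Adj v u) → ¬∃ u ∈ T, G.Adj v u) ∨
      (∀ u ∈ Xa ∪ Xb ∪ Xc ∪ Xd, G.Adj v u) := by
  intro v hv
  obtain ⟨a', ha', hA⟩ := exists_mem_forall_imp ha (G.Adj v)
  obtain ⟨b', hb', hB⟩ := exists_mem_forall_imp hb (G.Adj v)
  obtain ⟨c', hc', hC⟩ := exists_mem_forall_imp hc (G.Adj v)
  obtain ⟨d', hd', hD⟩ := exists_mem_forall_imp hd (G.Adj v)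
  by_cases h2 : 2 ≤ adjCount G v a' b' c' d'
  · exact Or.inr (hobs.forall_adj_of_two_le_adjCount hβ (hmax v hv) ha' hb' hc' hd' h2)
  · left
    rintro S T hS hT hST ⟨p, hp, hvp⟩ ⟨q, hq, hvq⟩
    -- the representatives of the two sets `S` and `T` are both neighbours of `v`
    unfold adjCount at h2
    rcases hS with rfl | rfl | rfl | rfl <;> rcases hT with rfl | rfl | rfl | rfl <;>
      first | exact hST rfl | grind

/-- If `(Xa,Xb,Xc,Xd)` is a maximal family of disjoint sets, each containing a
vertex of a `K₄`-obstruction, such that every choice of representatives gives a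
`K₄`-obstruction, then every vertex `v` outside `X = Xa ∪ Xb ∪ Xc ∪ Xd` either
has neighbours in at most one of the four sets, or is adjacent to every vertex
of `X`. -/
theorem naji_K4_neighbours {V : Type*} (G : SimpleGraph V) (β : V → V → ZMod 2)
    (hβ : NajiSolution G β) (a b c d : V)
    (Xa Xb Xc Xd : Set V)
    (ha : a ∈ Xa) (hb : b ∈ Xb) (hc : c ∈ Xc) (hd : d ∈ Xd)
    (hdab : Disjoint Xa Xb) (hdac : Disjoint Xa Xc) (hdad : Disjoint Xa Xd)
    (hdbc : Disjoint Xb Xc) (hdbd : Disjoint Xb Xd) (hdcd : Disjoint Xc Xd)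
    (hobs : AllObstructions G β Xa Xb Xc Xd)
    (hmax : ∀ v : V, v ∉ Xa ∪ Xb ∪ Xc ∪ Xd →
      ¬AllObstructions G β (insert v Xa) Xb Xc Xd ∧
      ¬AllObstructions G β Xa (insert v Xb) Xc Xd ∧
      ¬AllObstructions G β Xa Xb (insert v Xc) Xd ∧
      ¬AllObstructions G β Xa Xb Xc (insert v Xd)) :
    ∀ v : V, v ∉ Xa ∪ Xb ∪ Xc ∪ Xd →
      (∀ S T : Set V, (S = Xa ∨ S = Xb ∨ S = Xc ∨ S = Xd) →
        (T = Xa ∨ T = Xb ∨ T = Xc ∨ T = Xd) → S ≠ T →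
        (∃ u ∈ S, G.Adj v u) → ¬∃ u ∈ T, G.Adj v u) ∨
      (∀ u ∈ Xa ∪ Xb ∪ Xc ∪ Xd, G.Adj v u) :=
  naji_K4_neighbours_general G β hβ a b c d Xa Xb Xc Xd ha hb hc hd hobs hmax
end

section
/- Let G be a graph with a Naji-system solution β containing an induced claw on {x,a,b,c} with center x. Exactly one of the following holds: (i) all three of β(a,b)+β(a,c), β(b,a)+β(b,c), β(c,a)+β(c,b) equal 1, or (ii) exactly one of them equals 1 and in this case β restricted to {x,a,b,c} is chordal (realizable by an oriented chord diagram of the claw). -/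
/-- Cyclic betweenness on `Fin m`: `k` lies strictly inside the clockwise arc
from `p` to `q`. -/
def cycBtw {m : ℕ} (p k q : Fin m) : Prop :=
  if p < q then p < k ∧ k < q else p < k ∨ k < q

/-- An oriented chord diagram for `G`: a cyclic double occurrence word on the
vertex set (each vertex appears exactly twice, once marked as head and once as
tail), with two vertices adjacent iff their occurrences interleave. -/
structure OCD {V : Type*} [Fintype V] [DecidableEq V] (G : SimpleGraph V) where
  word : Fin (2 * Fintype.card V) → V
  isHead : Fin (2 * Fintype.card V) → Bool
  occ_two : ∀ v : V, (Finset.univ.filter fun i => word i = v).card = 2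
  head_one : ∀ v : V, (Finset.univ.filter fun i => word i = v ∧ isHead i = true).card = 1
  adj_iff : ∀ u v : V, u ≠ v →
    (G.Adj u v ↔ ∃ i j : Fin (2 * Fintype.card V), i < j ∧ word i = u ∧ word j = u ∧
      (Finset.univ.filter fun k => word k = v ∧ i < k ∧ k < j).card = 1)

/-- The diagram `D` realizes `β`: `β u v = 0` exactly when the head of the chord
`v` is encountered travelling clockwise from the head of `u` to the tail of `u`. -/
def OCD.Realizes {V : Type*} [Fintype V] [DecidableEq V] {G : SimpleGraph V}
    (D : OCD G) (β : V → V → ZMod 2) : Prop :=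
  ∀ u v : V, u ≠ v → ∀ hu tu hv : Fin (2 * Fintype.card V),
    D.word hu = u → D.isHead hu = true → D.word tu = u → D.isHead tu = false →
    D.word hv = v → D.isHead hv = true →
    (β u v = 0 ↔ cycBtw hu hv tu)

/-- A solution `β` is chordal if some oriented chord diagram for `G` realizes it. -/
def NajiChordal {V : Type*} [Fintype V] [DecidableEq V] (G : SimpleGraph V)
    (β : V → V → ZMod 2) : Prop :=
  ∃ D : OCD G, D.Realizes β

/-!
Equation (3) for the three pairs of leaves of the claw adds up, after the centre terms cancel, to
`(β a b + β a c) + (β b a + β b c) + (β c a + β c b) = 1`; so either all three leaf sums are `1`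
or exactly one is. In the second case call the leaves `p, q, r` with `q` the one of sum `1`.
Equations (1) and (3) then determine `β` on `{x, p, q, r}` from the four values
`β p q, β q p, β r q, β x p`, and these four bits are exactly the orientation choices of the chord
diagram `x p q r x r q p` (the chord of `x` crosses the nested chords `p ⊃ q ⊃ r`) that make it
realize `β`. Since chordality transfers along graph isomorphisms, it suffices to build this diagram
on the model claw `starGraph 0` on `Fin 4`.
-/

open SimpleGraph Finset

instance {m : ℕ} (p k q : Fin m) : Decidable (cycBtw p k q) :=
  inferInstanceAs (Decidable (if p < q then p < k ∧ k < q else p < k ∨ k < q))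

theorem cycBtw_cast {m n : ℕ} (h : m = n) (p k q : Fin m) :
    cycBtw (Fin.cast h p) (Fin.cast h k) (Fin.cast h q) ↔ cycBtw p k q := by
  simp only [cycBtw, Fin.cast_lt_cast]

theorem card_filter_fin_cast {m n : ℕ} (h : m = n) (p : Fin n → Prop) [DecidablePred p] :
    #{i : Fin m | p (Fin.cast h i)} = #{i | p i} := by
  subst h; rfl

theorem exists_interleave_fin_cast {V : Type*} [DecidableEq V] {m n : ℕ} (h : m = n)
    (w : Fin n → V) (u v : V) :
    (∃ i j : Fin m, i < j ∧ w (Fin.cast h i) = u ∧ w (Fin.cast h j) = u ∧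
      #{k | w (Fin.cast h k) = v ∧ i < k ∧ k < j} = 1) ↔
    ∃ i j : Fin n, i < j ∧ w i = u ∧ w j = u ∧ #{k | w k = v ∧ i < k ∧ k < j} = 1 := by
  subst h; rfl

theorem NajiChordal.of_iso {V W : Type*} [Fintype V] [DecidableEq V] [Fintype W] [DecidableEq W]
    {G : SimpleGraph V} {H : SimpleGraph W} {β : W → W → ZMod 2} (e : G ≃g H)
    (h : NajiChordal G fun u v => β (e u) (e v)) : NajiChordal H β := by
  obtain ⟨D, hD⟩ := h
  have hcard : 2 * Fintype.card W = 2 * Fintype.card V := by rw [Fintype.card_congr e.toEquiv]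
  have hword (i : Fin (2 * Fintype.card W)) (w : W) :
      e (D.word (Fin.cast hcard i)) = w ↔ D.word (Fin.cast hcard i) = e.symm w :=
    e.toEquiv.eq_symm_apply.symm
  refine ⟨{ word := fun i => e (D.word (Fin.cast hcard i))
            isHead := fun i => D.isHead (Fin.cast hcard i)
            occ_two := fun w => ?_
            head_one := fun w => ?_
            adj_iff := fun u v huv => ?_ }, ?_⟩
  · simp only [hword]
    exact (card_filter_fin_cast hcard _).trans (D.occ_two _)
  · simp only [hword]
    exact (card_filter_fin_cast hcard fun i => _ ∧ _).trans (D.head_one _)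
  · rw [← e.symm.map_adj_iff, D.adj_iff _ _ (e.symm.injective.ne huv)]
    simp only [hword]
    exact (exists_interleave_fin_cast hcard _ _ _).symm
  · intro u v huv hu tu hv hwu hhu hwt hht hwv hhv
    rw [hword] at hwu hwt hwv
    simpa only [RelIso.apply_symm_apply, cycBtw_cast] using
      hD _ _ (e.symm.injective.ne huv) _ _ _ hwu hhu hwt hht hwv hhv

theorem OCD.realizes_of_head_tail {V : Type*} [Fintype V] [DecidableEq V] {G : SimpleGraph V}
    (D : OCD G) {β : V → V → ZMod 2} (head tail : V → Fin (2 * Fintype.card V))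
    (hhead : ∀ i, D.isHead i = true → i = head (D.word i))
    (htail : ∀ i, D.isHead i = false → i = tail (D.word i))
    (h : ∀ u v, u ≠ v → (β u v = 0 ↔ cycBtw (head u) (head v) (tail u))) :
    D.Realizes β := by
  intro u v huv hu tu hv hwu hhu hwt hht hwv hhv
  rw [hhead hu hhu, htail tu hht, hhead hv hhv, hwu, hwt, hwv]
  exact h u v huv

namespace NajiSolution

variable {V : Type*} {G : SimpleGraph V} {β : V → V → ZMod 2}

theorem comap {W : Type*} {H : SimpleGraph W} (hβ : NajiSolution G β) (f : H ↪g G) :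
    NajiSolution H fun u v => β (f u) (f v) := by
  obtain ⟨hedge, hfar, hclaw⟩ := hβ
  refine ⟨fun v w hvw => hedge _ _ (f.map_adj_iff.2 hvw), ?_, ?_⟩
  · intro x v w hxv hxw hvw nxv nxw
    exact hfar _ _ _ (f.injective.ne hxv) (f.injective.ne hxw) (f.map_adj_iff.2 hvw)
      (mt f.map_adj_iff.1 nxv) (mt f.map_adj_iff.1 nxw)
  · intro x v w hvw hxv hxw nvw
    exact hclaw _ _ _ (f.injective.ne hvw) (f.map_adj_iff.2 hxv) (f.map_adj_iff.2 hxw)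
      (mt f.map_adj_iff.1 nvw)

theorem claw_parity (hβ : NajiSolution G β) {x a b c : V}
    (hab : a ≠ b) (hac : a ≠ c) (hbc : b ≠ c)
    (hxa : G.Adj x a) (hxb : G.Adj x b) (hxc : G.Adj x c)
    (nab : ¬G.Adj a b) (nbc : ¬G.Adj b c) (nca : ¬G.Adj c a) :
    (β a b + β a c) + (β b a + β b c) + (β c a + β c b) = 1 := by
  have tab := hβ.2.2 x a b hab hxa hxb nab
  have tac := hβ.2.2 x a c hac hxa hxc fun h => nca h.symm
  have tbc := hβ.2.2 x b c hbc hxb hxc nbc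
  grind

end NajiSolution

/-- The word `0 1 2 3 0 3 2 1`: the chord of the centre `0` crosses the nested chords
`1 ⊃ 2 ⊃ 3` of the leaves. -/
def clawWord : Fin 8 → Fin 4 := ![0, 1, 2, 3, 0, 3, 2, 1]

def clawHead (P Q R X : ZMod 2) : Fin 4 → Fin 8 :=
  ![if X = P then 0 else 4, if P = 0 then 1 else 7, if Q = 0 then 6 else 2, if R = 0 then 5 else 3]

def clawTail (P Q R X : ZMod 2) : Fin 4 → Fin 8 :=
  ![if X = P then 4 else 0, if P = 0 then 7 else 1, if Q = 0 then 2 else 6, if R = 0 then 3 else 5]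

def clawIsHead (P Q R X : ZMod 2) (i : Fin 8) : Bool := i = clawHead P Q R X (clawWord i)

theorem eq_clawHead_of_clawIsHead (P Q R X : ZMod 2) (i : Fin 8)
    (hi : clawIsHead P Q R X i = true) : i = clawHead P Q R X (clawWord i) :=
  of_decide_eq_true hi

theorem eq_clawTail_of_clawIsHead_eq_false (P Q R X : ZMod 2) (i : Fin 8)
    (hi : clawIsHead P Q R X i = false) : i = clawTail P Q R X (clawWord i) := by
  revert P Q R X i; decide

def clawOCD (P Q R X : ZMod 2) : OCD (starGraph (0 : Fin 4)) where
  word := clawWord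
  isHead := clawIsHead P Q R X
  occ_two := by decide
  head_one := by revert P Q R X; decide
  adj_iff := by
    show ∀ u v : Fin 4, u ≠ v → ((starGraph 0).Adj u v ↔ ∃ i j : Fin 8, i < j ∧
      clawWord i = u ∧ clawWord j = u ∧ #{k | clawWord k = v ∧ i < k ∧ k < j} = 1)
    decide

/-- Off the diagonal, the general solution of the Naji system on `starGraph 0` with leaf sums
`0, 1, 0`, in terms of `P = β 1 2`, `Q = β 2 1`, `R = β 3 2` and `X = β 0 1`. -/
def clawSolution (P Q R X : ZMod 2) : Fin 4 → Fin 4 → ZMod 2 :=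
  ![![0, X, 1 + P + Q + X, 1 + P + R + X],
    ![1 + X, 0, P, P],
    ![P + Q + X, Q, 0, 1 + Q],
    ![P + R + X, R, R, 0]]

theorem clawSolution_eq_zero_iff (P Q R X : ZMod 2) (u v : Fin 4) (huv : u ≠ v) :
    clawSolution P Q R X u v = 0 ↔
      cycBtw (clawHead P Q R X u) (clawHead P Q R X v) (clawTail P Q R X u) := by
  revert P Q R X u v; decide

theorem NajiSolution.eq_clawSolution {β : Fin 4 → Fin 4 → ZMod 2}
    (hβ : NajiSolution (starGraph 0) β) (h₁ : β 1 2 + β 1 3 = 0) (h₂ : β 2 1 + β 2 3 = 1)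
    (h₃ : β 3 1 + β 3 2 = 0) (u v : Fin 4) (huv : u ≠ v) :
    β u v = clawSolution (β 1 2) (β 2 1) (β 3 2) (β 0 1) u v := by
  obtain ⟨hedge, -, hclaw⟩ := hβ
  have e₁ := hedge 0 1 (by decide)
  have e₂ := hedge 0 2 (by decide)
  have e₃ := hedge 0 3 (by decide)
  have t₁₂ := hclaw 0 1 2 (by decide) (by decide) (by decide) (by decide)
  have t₁₃ := hclaw 0 1 3 (by decide) (by decide) (by decide) (by decide)
  fin_cases u <;> fin_cases v <;>
    simp only [clawSolution, Fin.zero_eta, Fin.mk_one, Fin.reduceFinMk, Matrix.cons_val,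
      Matrix.cons_val_zero, Matrix.cons_val_one] <;> grind

theorem najiChordal_starGraph {β : Fin 4 → Fin 4 → ZMod 2}
    (hβ : NajiSolution (starGraph 0) β) (h₁ : β 1 2 + β 1 3 = 0) (h₂ : β 2 1 + β 2 3 = 1)
    (h₃ : β 3 1 + β 3 2 = 0) : NajiChordal (starGraph 0) β := by
  refine ⟨clawOCD (β 1 2) (β 2 1) (β 3 2) (β 0 1), OCD.realizes_of_head_tail _
    (clawHead (β 1 2) (β 2 1) (β 3 2) (β 0 1)) (clawTail (β 1 2) (β 2 1) (β 3 2) (β 0 1))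
    (eq_clawHead_of_clawIsHead _ _ _ _) (eq_clawTail_of_clawIsHead_eq_false _ _ _ _)
    fun u v huv => ?_⟩
  rw [hβ.eq_clawSolution h₁ h₂ h₃ u v huv]
  exact clawSolution_eq_zero_iff _ _ _ _ u v huv

noncomputable def SimpleGraph.Embedding.isoInduce {V W : Type*} {G : SimpleGraph V}
    {H : SimpleGraph W} (f : H ↪g G) {s : Set V} (hs : Set.range f = s) : H ≃g G.induce s where
  toEquiv := (Equiv.ofInjective f f.injective).trans (Equiv.setCongr hs)
  map_rel_iff' := f.map_adj_iff

section Claw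

variable {V : Type*} {G : SimpleGraph V} {x p q r : V}

def SimpleGraph.clawEmbedding (hpq : p ≠ q) (hpr : p ≠ r) (hqr : q ≠ r)
    (hxp : G.Adj x p) (hxq : G.Adj x q) (hxr : G.Adj x r)
    (npq : ¬G.Adj p q) (npr : ¬G.Adj p r) (nqr : ¬G.Adj q r) : starGraph (0 : Fin 4) ↪g G where
  toFun := ![x, p, q, r]
  inj' := by
    intro u v h
    fin_cases u <;> fin_cases v <;> simp_all [hxp.ne, hxq.ne, hxr.ne, hxp.ne', hxq.ne', hxr.ne']
  map_rel_iff' := by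
    intro u v
    change G.Adj (![x, p, q, r] u) (![x, p, q, r] v) ↔ _
    fin_cases u <;> fin_cases v <;> simp [starGraph_adj, G.adj_comm, *]

theorem NajiSolution.najiChordal_induce_claw [Fintype V] [DecidableEq V] {β : V → V → ZMod 2}
    (hβ : NajiSolution G β) (hpq : p ≠ q) (hpr : p ≠ r) (hqr : q ≠ r)
    (hxp : G.Adj x p) (hxq : G.Adj x q) (hxr : G.Adj x r)
    (npq : ¬G.Adj p q) (npr : ¬G.Adj p r) (nqr : ¬G.Adj q r)
    (hp : β p q + β p r = 0) (hq : β q p + β q r = 1) (hr : β r p + β r q = 0) :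
    NajiChordal (G.induce (({x, p, q, r} : Finset V) : Set V)) fun u v => β u v := by
  let f := clawEmbedding hpq hpr hqr hxp hxq hxr npq npr nqr
  have hrange : Set.range f = (({x, p, q, r} : Finset V) : Set V) := by
    change Set.range ![x, p, q, r] = _
    simp only [Matrix.range_cons, Matrix.range_empty, Set.union_empty, Set.singleton_union,
      Finset.coe_insert, Finset.coe_singleton]
  exact NajiChordal.of_iso (f.isoInduce hrange) (najiChordal_starGraph (hβ.comap f) hp hq hr)

end Claw

theorem xor_all_or_exactly_one_of_add_add_eq_one {s t u : ZMod 2} (h : s + t + u = 1) {C : Prop}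
    (hC : (s = 1 ∧ t = 0 ∧ u = 0) ∨ (s = 0 ∧ t = 1 ∧ u = 0) ∨ (s = 0 ∧ t = 0 ∧ u = 1) → C) :
    Xor' (s = 1 ∧ t = 1 ∧ u = 1)
      (((s = 1 ∧ t = 0 ∧ u = 0) ∨ (s = 0 ∧ t = 1 ∧ u = 0) ∨ (s = 0 ∧ t = 0 ∧ u = 1)) ∧ C) := by
  unfold Xor'
  by_cases hc : C
  · simp only [hc, and_true]
    clear hC; revert s t u; decide
  · have := mt hC hc
    simp only [hc, and_false]
    clear hC hc; revert s t u; decide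

/-- For an induced claw `{x,a,b,c}` with centre `x`, exactly one of the
following holds: (i) all three of `β a b + β a c`, `β b a + β b c`,
`β c a + β c b` equal `1`; or (ii) exactly one of them equals `1`, and then the
restriction of `β` to `{x,a,b,c}` is chordal. -/
theorem naji_claw_dichotomy {V : Type*} [Fintype V] [DecidableEq V]
    (G : SimpleGraph V) (β : V → V → ZMod 2) (hβ : NajiSolution G β)
    (x a b c : V) (hab : a ≠ b) (hac : a ≠ c) (hbc : b ≠ c)
    (hxa : G.Adj x a) (hxb : G.Adj x b) (hxc : G.Adj x c)
    (nab : ¬G.Adj a b) (nbc : ¬G.Adj b c) (nca : ¬G.Adj c a) :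
    Xor'
      (β a b + β a c = 1 ∧ β b a + β b c = 1 ∧ β c a + β c b = 1)
      (((β a b + β a c = 1 ∧ β b a + β b c = 0 ∧ β c a + β c b = 0) ∨
        (β a b + β a c = 0 ∧ β b a + β b c = 1 ∧ β c a + β c b = 0) ∨
        (β a b + β a c = 0 ∧ β b a + β b c = 0 ∧ β c a + β c b = 1)) ∧
       NajiChordal (G.induce (({x, a, b, c} : Finset V) : Set V))
         (fun u v => β u.1 v.1)) := by
  refine xor_all_or_exactly_one_of_add_add_eq_one
    (hβ.claw_parity hab hac hbc hxa hxb hxc nab nbc nca) ?_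
  rintro (⟨ha, hb, hc⟩ | ⟨ha, hb, hc⟩ | ⟨ha, hb, hc⟩)
  · rw [Finset.insert_comm a b]
    exact hβ.najiChordal_induce_claw hab.symm hbc hac hxb hxa hxc (fun h => nab h.symm) nbc
      (fun h => nca h.symm) hb ha (by rwa [add_comm])
  · exact hβ.najiChordal_induce_claw hab hac hbc hxa hxb hxc nab (fun h => nca h.symm) nbc
      ha hb hc
  · rw [Finset.pair_comm b c]
    exact hβ.najiChordal_induce_claw hac hab hbc.symm hxa hxc hxb (fun h => nca h.symm) nab
      (fun h => nbc h.symm) (by rwa [add_comm]) hc hb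
end
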